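/- arXiv:2507.18427 — 4 statements merged into one kernel-verified Lean document; each statement's English description precedes it below -/
import Mathlib

section
/- Let ν be a locally finite (Radon) measure on ℝ⁺ × ℝ and fix t̄ ≥ 0. Then for Lebesgue-almost every x̄ ∈ ℝ, the limit as r → 0⁺ of (1/r)·ν(((t̄−r, t̄) ∪ (t̄, t̄+r)) × (x̄−r, x̄+r)) equals 0. -/
open MeasureTheory Set Filter Topology Metric

/-! Restricting `ν` to the punctured slabs `(ball t̄ (1/(n+1)) \ {t̄}) × ℝ` and projecting to the
second coordinate gives locally finite measures `ρₙ` on `ℝ` with `ρₙ K → 0` for every compact `K`,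
because the slabs decrease to the empty set. Then `∫⁻_K ⨅ₙ dρₙ/dx ≤ ρₙ K → 0`, so
`⨅ₙ dρₙ/dx = 0` almost everywhere. At a point `x̄` where this holds and where Besicovitch
differentiation applies to every `ρₙ`, pick `n` with `dρₙ/dx (x̄) < ε`; for small `r ≤ 1/(n+1)` the
slab measure is at most `ρₙ [x̄ - r, x̄ + r] ≤ 2 ε r`. -/

namespace MeasureTheory

variable {α β : Type*} [MeasurableSpace α] [MeasurableSpace β]

lemma Measure.snd_restrict_prod_univ_apply (ν : Measure (α × β)) (S : Set α) {A : Set β}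
    (hA : MeasurableSet A) : (ν.restrict (S ×ˢ univ)).snd A = ν (S ×ˢ A) := by
  rw [Measure.snd_apply hA, Measure.restrict_apply (measurable_snd hA)]
  congr 1
  ext
  simp [and_comm]

lemma Measure.isLocallyFiniteMeasure_snd_restrict_prod_univ [PseudoMetricSpace α] [ProperSpace α]
    [TopologicalSpace β] [T2Space β] [WeaklyLocallyCompactSpace β] [OpensMeasurableSpace β]
    (ν : Measure (α × β)) [IsFiniteMeasureOnCompacts ν] {S : Set α}
    (hS : Bornology.IsBounded S) : IsLocallyFiniteMeasure (ν.restrict (S ×ˢ univ)).snd := by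
  have : IsFiniteMeasureOnCompacts (ν.restrict (S ×ˢ univ)).snd := ⟨fun K hK => by
    rw [Measure.snd_restrict_prod_univ_apply ν S hK.isClosed.measurableSet]
    exact (measure_mono (Set.prod_mono subset_closure subset_rfl)).trans_lt
      (hS.isCompact_closure.prod hK).measure_lt_top⟩
  infer_instance

lemma tendsto_measure_puncturedBall_prod [MetricSpace α] [ProperSpace α]
    [OpensMeasurableSpace α] [TopologicalSpace β] [T2Space β] [OpensMeasurableSpace β]
    (ν : Measure (α × β)) [IsFiniteMeasureOnCompacts ν] (a : α) {K : Set β} (hK : IsCompact K) :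
    Tendsto (fun n : ℕ => ν ((ball a (1 / (n + 1)) \ {a}) ×ˢ K)) atTop (𝓝 0) := by
  have hempty : ⋂ n : ℕ, (ball a (1 / (n + 1)) \ {a}) ×ˢ K = ∅ := by
    refine eq_empty_of_forall_notMem fun p hp => ?_
    have hne : p.1 ≠ a := (mem_iInter.1 hp 0).1.2
    obtain ⟨n, hn⟩ := exists_nat_one_div_lt (dist_pos.2 hne)
    exact (mem_ball.1 (mem_iInter.1 hp n).1.1).not_ge hn.le
  have hanti : Antitone fun n : ℕ => (ball a (1 / (n + 1)) \ {a}) ×ˢ K := fun m n hmn =>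
    Set.prod_mono (sdiff_subset_sdiff_left (ball_subset_ball (Nat.one_div_le_one_div hmn)))
      subset_rfl
  have hfin : ∃ n : ℕ, ν ((ball a (1 / (n + 1)) \ {a}) ×ˢ K) ≠ ⊤ :=
    ⟨0, ((measure_mono (Set.prod_mono (sdiff_subset.trans ball_subset_closedBall)
      subset_rfl)).trans_lt ((isCompact_closedBall a _).prod hK).measure_lt_top).ne⟩
  have hmeas : ∀ n : ℕ, MeasurableSet ((ball a (1 / (n + 1)) \ {a}) ×ˢ K) := fun n =>
    (measurableSet_ball.diff (measurableSet_singleton a)).prod hK.isClosed.measurableSet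
  have h := tendsto_measure_iInter_atTop (fun n => (hmeas n).nullMeasurableSet) hanti hfin
  rwa [hempty, measure_empty] at h

lemma ae_iInf_rnDeriv_eq_zero [TopologicalSpace α] [T2Space α] [SigmaCompactSpace α]
    [OpensMeasurableSpace α] (μ : Measure α) (ρ : ℕ → Measure α)
    (hρ : ∀ K, IsCompact K → Tendsto (fun n => ρ n K) atTop (𝓝 0)) :
    ∀ᵐ x ∂μ, ⨅ n, (ρ n).rnDeriv μ x = 0 := by
  have hmeas : Measurable fun x => ⨅ n, (ρ n).rnDeriv μ x :=
    .iInf fun n => Measure.measurable_rnDeriv _ _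
  suffices h : ∀ᵐ x ∂μ.restrict (⋃ k, compactCovering α k), ⨅ n, (ρ n).rnDeriv μ x = 0 by
    rwa [iUnion_compactCovering, Measure.restrict_univ] at h
  refine (ae_restrict_iUnion_iff _ _).2 fun k => ?_
  set K := compactCovering α k
  refine (lintegral_eq_zero_iff hmeas).1 (le_antisymm ?_ bot_le)
  refine ge_of_tendsto' (hρ K (isCompact_compactCovering α k)) fun n => ?_
  calc ∫⁻ x in K, ⨅ n, (ρ n).rnDeriv μ x ∂μ ≤ ∫⁻ x in K, (ρ n).rnDeriv μ x ∂μ :=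
        lintegral_mono fun x => iInf_le _ n
    _ ≤ ρ n K := Measure.setLIntegral_rnDeriv_le K

lemma ae_exists_eventually_measure_closedBall_le [MetricSpace α] [SecondCountableTopology α]
    [BorelSpace α] [HasBesicovitchCovering α] [SigmaCompactSpace α] (μ : Measure α)
    [IsLocallyFiniteMeasure μ] (ρ : ℕ → Measure α) [∀ n, IsLocallyFiniteMeasure (ρ n)]
    (hρ : ∀ K, IsCompact K → Tendsto (fun n => ρ n K) atTop (𝓝 0)) :
    ∀ᵐ x ∂μ, ∀ ε : ℝ, 0 < ε → ∃ n, ∀ᶠ r in 𝓝[>] 0,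
      ρ n (closedBall x r) ≤ ENNReal.ofReal ε * μ (closedBall x r) := by
  filter_upwards [ae_all_iff.2 fun n => Besicovitch.ae_tendsto_rnDeriv (ρ n) μ,
    ae_iInf_rnDeriv_eq_zero μ ρ hρ] with x hx hx0 ε hε
  have hε' : ⨅ n, (ρ n).rnDeriv μ x < ENNReal.ofReal ε := hx0 ▸ ENNReal.ofReal_pos.2 hε
  obtain ⟨n, hn⟩ := iInf_lt_iff.1 hε'
  refine ⟨n, ((hx n).eventually_lt_const hn).mono fun r hr => ?_⟩
  exact (ENNReal.div_le_iff_le_mul (.inr ENNReal.ofReal_ne_top)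
    (.inr (ENNReal.ofReal_pos.2 hε).ne')).1 hr.le

end MeasureTheory

lemma Real.Ioo_union_Ioo_eq_ball_diff (a δ : ℝ) :
    Ioo (a - δ) a ∪ Ioo a (a + δ) = ball a δ \ {a} := by
  ext t
  simp only [mem_union, mem_Ioo, Set.mem_sdiff, Real.ball_eq_Ioo, mem_singleton_iff]
  constructor
  · rintro (⟨h₁, h₂⟩ | ⟨h₁, h₂⟩)
    exacts [⟨⟨h₁, by linarith⟩, h₂.ne⟩, ⟨⟨by linarith, h₂⟩, h₁.ne'⟩]
  · rintro ⟨⟨h₁, h₂⟩, hne⟩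
    rcases Ne.lt_or_gt hne with h | h
    exacts [.inl ⟨h₁, h⟩, .inr ⟨h, h₂⟩]

lemma tendsto_toReal_div_nhdsGT_zero {m : ℝ → ENNReal}
    (hm : ∀ ε > 0, ∀ᶠ r in 𝓝[>] 0, m r ≤ ENNReal.ofReal (ε * r)) :
    Tendsto (fun r => (m r).toReal / r) (𝓝[>] 0) (𝓝 0) := by
  refine tendsto_order.2 ⟨fun a ha => ?_, fun a ha => ?_⟩
  · filter_upwards [self_mem_nhdsWithin] with r (hr : 0 < r)
    exact ha.trans_le (div_nonneg ENNReal.toReal_nonneg hr.le)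
  · filter_upwards [hm (a / 2) (half_pos ha), self_mem_nhdsWithin] with r hmr (hr : 0 < r)
    rw [div_lt_iff₀ hr]
    calc (m r).toReal ≤ a / 2 * r := ENNReal.toReal_le_of_le_ofReal (by positivity) hmr
      _ < a * r := by nlinarith

theorem stmt_0_general (ν : Measure (ℝ × ℝ)) [IsLocallyFiniteMeasure ν]
    (tb : ℝ) :
    ∀ᵐ xb : ℝ, Tendsto
      (fun r : ℝ =>
        (ν ((Ioo (tb - r) tb ∪ Ioo tb (tb + r)) ×ˢ Ioo (xb - r) (xb + r))).toReal / r)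
      (𝓝[>] 0) (𝓝 0) := by
  set ρ : ℕ → Measure ℝ := fun n => (ν.restrict ((ball tb (1 / (n + 1)) \ {tb}) ×ˢ univ)).snd
  have hρ : ∀ n, IsLocallyFiniteMeasure (ρ n) := fun n =>
    Measure.isLocallyFiniteMeasure_snd_restrict_prod_univ ν (isBounded_ball.subset sdiff_subset)
  have hρ_vanish : ∀ K, IsCompact K → Tendsto (fun n => ρ n K) atTop (𝓝 0) := fun K hK => by
    simp only [ρ, Measure.snd_restrict_prod_univ_apply ν _ hK.isClosed.measurableSet]
    exact tendsto_measure_puncturedBall_prod ν tb hK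
  filter_upwards [ae_exists_eventually_measure_closedBall_le volume ρ hρ_vanish] with x hx
  refine tendsto_toReal_div_nhdsGT_zero fun ε hε => ?_
  obtain ⟨n, hn⟩ := hx (ε / 2) (half_pos hε)
  filter_upwards [hn, Ioc_mem_nhdsGT (Nat.one_div_pos_of_nat (α := ℝ) (n := n))]
    with r hr ⟨hr0, hrn⟩
  calc ν ((Ioo (tb - r) tb ∪ Ioo tb (tb + r)) ×ˢ Ioo (x - r) (x + r))
      ≤ ρ n (closedBall x r) := by
        rw [Measure.snd_restrict_prod_univ_apply ν _ measurableSet_closedBall,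
          Real.Ioo_union_Ioo_eq_ball_diff, Real.closedBall_eq_Icc]
        exact measure_mono (Set.prod_mono (sdiff_subset_sdiff_left (ball_subset_ball hrn))
          Ioo_subset_Icc_self)
    _ ≤ ENNReal.ofReal (ε / 2) * volume (closedBall x r) := hr
    _ = ENNReal.ofReal (ε * r) := by
        rw [Real.volume_closedBall, ← ENNReal.ofReal_mul (by positivity)]
        ring_nf

/-- For a locally finite measure ν on ℝ⁺ × ℝ and t̄ ≥ 0, for a.e. x̄ the
ν-measure of the punctured time slab around t̄ with spatial window of size r
is o(r) as r → 0⁺. -/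
theorem stmt_0 (ν : Measure (ℝ × ℝ)) [IsLocallyFiniteMeasure ν]
    (tb : ℝ) (htb : 0 ≤ tb) :
    ∀ᵐ xb : ℝ, Tendsto
      (fun r : ℝ =>
        (ν ((Ioo (tb - r) tb ∪ Ioo tb (tb + r)) ×ˢ Ioo (xb - r) (xb + r))).toReal / r)
      (𝓝[>] 0) (𝓝 0) :=
  stmt_0_general ν tb
end

section
/- Let w ∈ L^∞(ℝ²; ℝ) and let σ : (t₁, t₂) → ℝ be a Lipschitz curve such that for almost every t ∈ (t₁,t₂) the point (t, σ(t)) is a Lebesgue point of w. Then lim_{δ→0} ∫_{t₁}^{t₂} (1/δ) ∫_{σ(t)−δ}^{σ(t)+δ} |w(t,x) − w(t, σ(t))| dx dt = 0. -/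
/-!
Write `γ s = (s, σ s)`. Averaging the triangle inequality
`|w (t, x) - w (γ t)| ≤ |w (t, x) - w (γ s)| + |w (γ s) - w (γ t)|` over `s ∈ [t - δ, t + δ]`
splits the vertical oscillation of `w` at `γ t` into a two-dimensional part and a part along the
curve. As `σ` is `K`-Lipschitz, `(t, x)` lies in the ball of radius `(K + 2) δ` around `γ s`, so by
Tonelli the two-dimensional part is at most `(K + 2)²` times the integral over `s` of the mean
oscillation of `w` on that ball, which tends to `0` by dominated convergence at the Lebesgue points
`γ s`. The part along the curve is the mean oscillation of the bounded function `s ↦ w (γ s)` on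
`[t - δ, t + δ]`, which tends to `0` a.e. by the one-dimensional Lebesgue differentiation theorem.
Working with lower Lebesgue integrals throughout avoids all integrability side conditions.
-/

open MeasureTheory Set Filter Topology Metric
open scoped ENNReal NNReal

theorem Measurable.setLIntegral_prodMk_preimage {α β : Type*} [MeasurableSpace α]
    [MeasurableSpace β] {ν : Measure β} [SFinite ν] {f : α × β → ℝ≥0∞} (hf : Measurable f)
    {S : Set (α × β)} (hS : MeasurableSet S) :
    Measurable fun a => ∫⁻ b in Prod.mk a ⁻¹' S, f (a, b) ∂ν := by
  simp_rw [← lintegral_indicator (measurable_prodMk_left hS)]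
  exact (hf.indicator hS).lintegral_prod_right'

theorem setLAverage_le_of_forall_le {α : Type*} [MeasurableSpace α] {μ : Measure α}
    {s : Set α} {f : α → ℝ≥0∞} {c : ℝ≥0∞} (h : ∀ x, f x ≤ c) : ⨍⁻ x in s, f x ∂μ ≤ c :=
  (setLAverage_le_essSup s f).trans (essSup_le_of_ae_le c (ae_of_all _ h))

theorem tendsto_setLIntegral_zero_of_le_const {α ι : Type*} [MeasurableSpace α]
    {μ : Measure α} {s : Set α} (hs : μ s ≠ ∞) {l : Filter ι} [l.IsCountablyGenerated]
    {F : ι → α → ℝ≥0∞} {c : ℝ≥0∞} (hc : c ≠ ∞) (hF : ∀ᶠ i in l, Measurable (F i))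
    (hFc : ∀ i a, F i a ≤ c) (hlim : ∀ᵐ a ∂μ.restrict s, Tendsto (F · a) l (𝓝 0)) :
    Tendsto (fun i => ∫⁻ a in s, F i a ∂μ) l (𝓝 0) := by
  simpa using tendsto_lintegral_filter_of_dominated_convergence (fun _ => c) hF
    (.of_forall fun i => ae_of_all _ (hFc i)) (by simp [ENNReal.mul_eq_top, hc, hs]) hlim

theorem measure_mul_lintegral_enorm_sub_le {α β : Type*} [MeasurableSpace α] [MeasurableSpace β]
    (μ : Measure α) (ν : Measure β) (f : α → ℝ) {g : β → ℝ} (hg : Measurable g) (c : ℝ) :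
    ν univ * ∫⁻ x, ‖f x - c‖ₑ ∂μ
      ≤ ∫⁻ x, ∫⁻ y, ‖f x - g y‖ₑ ∂ν ∂μ + (∫⁻ y, ‖g y - c‖ₑ ∂ν) * μ univ := by
  have htri : ∀ x, ν univ * ‖f x - c‖ₑ ≤ ∫⁻ y, ‖f x - g y‖ₑ ∂ν + ∫⁻ y, ‖g y - c‖ₑ ∂ν := by
    intro x
    rw [← lintegral_add_right _ (by fun_prop), mul_comm, ← lintegral_const]
    exact lintegral_mono fun y => by
      simpa only [sub_add_sub_cancel] using enorm_add_le (f x - g y) (g y - c)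
  calc ν univ * ∫⁻ x, ‖f x - c‖ₑ ∂μ ≤ ∫⁻ x, ν univ * ‖f x - c‖ₑ ∂μ := lintegral_const_mul_le _ _
    _ ≤ ∫⁻ x, (∫⁻ y, ‖f x - g y‖ₑ ∂ν + ∫⁻ y, ‖g y - c‖ₑ ∂ν) ∂μ := lintegral_mono htri
    _ = _ := by rw [lintegral_add_right _ measurable_const, lintegral_const]

theorem setLAverage_enorm_sub_le {α β : Type*} [MeasurableSpace α] [MeasurableSpace β]
    {μ : Measure α} {ν : Measure β} {A : Set α} {B : Set β} (hA₀ : μ A ≠ 0) (hA : μ A ≠ ∞)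
    (hB₀ : ν B ≠ 0) (hB : ν B ≠ ∞) (f : α → ℝ) {g : β → ℝ} (hg : Measurable g) (c : ℝ) :
    ⨍⁻ x in A, ‖f x - c‖ₑ ∂μ
      ≤ ⨍⁻ x in A, ⨍⁻ y in B, ‖f x - g y‖ₑ ∂ν ∂μ + ⨍⁻ y in B, ‖g y - c‖ₑ ∂ν := by
  simp only [setLAverage_eq']
  have hμ : ((μ A)⁻¹ • μ.restrict A) univ = 1 := by simp [ENNReal.inv_mul_cancel hA₀ hA]
  have hν : ((ν B)⁻¹ • ν.restrict B) univ = 1 := by simp [ENNReal.inv_mul_cancel hB₀ hB]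
  simpa [hμ, hν] using
    measure_mul_lintegral_enorm_sub_le ((μ A)⁻¹ • μ.restrict A) ((ν B)⁻¹ • ν.restrict B) f hg c

theorem tendsto_setLAverage_enorm_sub_of_tendsto {α : Type*} [PseudoMetricSpace α] [ProperSpace α]
    [MeasurableSpace α] {μ : Measure α} [IsFiniteMeasureOnCompacts μ] {f : α → ℝ}
    (hf : LocallyIntegrable f μ) {x : α}
    (h : Tendsto (fun r : ℝ => (μ (ball x r)).toReal⁻¹ * ∫ y in ball x r, |f y - f x| ∂μ)
      (𝓝[>] 0) (𝓝 0)) :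
    Tendsto (fun r => ⨍⁻ y in ball x r, ‖f y - f x‖ₑ ∂μ) (𝓝[>] 0) (𝓝 0) := by
  have hofReal : ∀ r, ENNReal.ofReal ((μ (ball x r)).toReal⁻¹ * ∫ y in ball x r, |f y - f x| ∂μ)
      = ⨍⁻ y in ball x r, ‖f y - f x‖ₑ ∂μ := by
    intro r
    have hint : IntegrableOn (fun y => |f y - f x|) (ball x r) μ :=
      (((hf.integrableOn_isCompact (isCompact_closedBall x r)).mono_set
        ball_subset_closedBall).sub (integrableOn_const measure_ball_lt_top.ne)).abs
    rw [← smul_eq_mul, ← measureReal_def, ← setAverage_eq,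
      ofReal_setAverage hint (ae_of_all _ fun _ => abs_nonneg _), setLAverage_eq]
    simp_rw [Real.enorm_eq_ofReal_abs]
  have hlim := (ENNReal.continuous_ofReal.tendsto 0).comp h
  rw [ENNReal.ofReal_zero] at hlim
  exact hlim.congr hofReal

theorem IsUnifLocDoublingMeasure.ae_tendsto_setLAverage_enorm_sub {α E : Type*}
    [PseudoMetricSpace α] [MeasurableSpace α] {μ : Measure α} [IsUnifLocDoublingMeasure μ]
    [SecondCountableTopology α] [BorelSpace α] [IsLocallyFiniteMeasure μ] [NormedAddCommGroup E]
    {f : α → E} (hf : LocallyIntegrable f μ) :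
    ∀ᵐ x ∂μ, Tendsto (fun r => ⨍⁻ y in closedBall x r, ‖f y - f x‖ₑ ∂μ) (𝓝[>] 0) (𝓝 0) := by
  filter_upwards [(vitaliFamily μ 1).ae_tendsto_lintegral_enorm_sub_div hf] with x hx
  have hballs := tendsto_closedBall_filterAt μ (K := 1) (fun _ => x) id tendsto_id
    (by filter_upwards [self_mem_nhdsWithin] with r (hr : 0 < r)
        using mem_closedBall_self (by simpa using hr.le))
  simp_rw [setLAverage_eq]
  exact hx.comp hballs

theorem locallyIntegrable_of_abs_le {X : Type*} [TopologicalSpace X] [MeasurableSpace X]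
    {μ : Measure X} [IsLocallyFiniteMeasure μ] {f : X → ℝ} (hf : AEStronglyMeasurable f μ) {C : ℝ}
    (hC : ∀ x, |f x| ≤ C) : LocallyIntegrable f μ :=
  (locallyIntegrable_const C).mono hf
    (ae_of_all _ fun x => by simpa [Real.norm_eq_abs] using (hC x).trans (le_abs_self C))

theorem enorm_sub_le_ofReal_two_mul {a b C : ℝ} (ha : |a| ≤ C) (hb : |b| ≤ C) :
    ‖a - b‖ₑ ≤ ENNReal.ofReal (2 * C) := by
  rw [Real.enorm_eq_ofReal_abs]
  exact ENNReal.ofReal_le_ofReal (by linarith [abs_sub a b])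

theorem volume_ball_prod_real (p : ℝ × ℝ) (r : ℝ) :
    volume (ball p r) = ENNReal.ofReal (2 * r) * ENNReal.ofReal (2 * r) := by
  rw [← ball_prod_same, Measure.volume_eq_prod, Measure.prod_prod, Real.volume_ball,
    Real.volume_ball]

theorem setLIntegral_Ioo_sub_add_le {f : ℝ → ℝ≥0∞} {c : ℝ≥0∞} (hf : ∀ s, f s ≤ c)
    (t₁ t₂ : ℝ) {δ : ℝ} (hδ : 0 ≤ δ) :
    ∫⁻ s in Ioo (t₁ - δ) (t₂ + δ), f s ≤ (∫⁻ s in Ioo t₁ t₂, f s) + c * ENNReal.ofReal (2 * δ) := by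
  set E := Ioc (t₁ - δ) t₁ ∪ Ico t₂ (t₂ + δ)
  have hsub : Ioo (t₁ - δ) (t₂ + δ) ⊆ Ioo t₁ t₂ ∪ E := by
    rintro s ⟨h₁, h₂⟩
    by_cases hs₁ : t₁ < s <;> by_cases hs₂ : s < t₂ <;> simp_all [E, not_lt.mp]
  have hE : volume E ≤ ENNReal.ofReal (2 * δ) := by
    calc volume E ≤ volume (Ioc (t₁ - δ) t₁) + volume (Ico t₂ (t₂ + δ)) := measure_union_le _ _
      _ = ENNReal.ofReal (2 * δ) := by
        rw [Real.volume_Ioc, Real.volume_Ico, ← ENNReal.ofReal_add (by linarith) (by linarith)]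
        ring_nf
  calc ∫⁻ s in Ioo (t₁ - δ) (t₂ + δ), f s ≤ ∫⁻ s in Ioo t₁ t₂ ∪ E, f s := lintegral_mono_set hsub
    _ ≤ (∫⁻ s in Ioo t₁ t₂, f s) + ∫⁻ s in E, f s := lintegral_union_le f _ _
    _ ≤ (∫⁻ s in Ioo t₁ t₂, f s) + c * volume E := by
        gcongr
        exact (lintegral_mono hf).trans (setLIntegral_const E c).le
    _ ≤ _ := by grw [hE]

theorem measurable_setLAverage_closedBall {f : ℝ → ℝ} (hf : Measurable f) (r : ℝ) :
    Measurable fun t => ⨍⁻ s in closedBall t r, ‖f s - f t‖ₑ ∂volume := by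
  simp_rw [setLAverage_eq, Real.volume_closedBall]
  have hS : MeasurableSet {z : ℝ × ℝ | dist z.2 z.1 ≤ r} :=
    measurableSet_le (by fun_prop) measurable_const
  exact (Measurable.setLIntegral_prodMk_preimage (f := fun z : ℝ × ℝ => ‖f z.2 - f z.1‖ₑ)
    (by fun_prop) hS).div_const _

theorem LipschitzWith.mk_mem_ball_mk {σ : ℝ → ℝ} {K : ℝ≥0} (hσ : LipschitzWith K σ)
    {t s x δ : ℝ} (hs : s ∈ closedBall t δ) (hx : x ∈ ball (σ t) δ) :
    (t, x) ∈ ball (s, σ s) ((K + 2) * δ) := by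
  rw [mem_closedBall, Real.dist_eq, abs_sub_comm] at hs
  rw [mem_ball, Real.dist_eq] at hx
  have hσts : |σ t - σ s| ≤ K * |t - s| := by
    simpa [Real.dist_eq] using hσ.dist_le_mul t s
  have hKts : (K : ℝ) * |t - s| ≤ K * δ := mul_le_mul_of_nonneg_left hs K.2
  have hδ : 0 < δ := (abs_nonneg _).trans_lt hx
  rw [mem_ball, Prod.dist_eq, Real.dist_eq, Real.dist_eq, max_lt_iff]
  refine ⟨?_, ?_⟩
  · nlinarith [K.2]
  · linarith [abs_sub_le x (σ t) (σ s), K.2]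

section Graph

variable {w : ℝ × ℝ → ℝ} {σ : ℝ → ℝ}

theorem measurable_setLAverage_ball_graph (hw : Measurable w) (hσ : Measurable σ) (r : ℝ) :
    Measurable fun s => ⨍⁻ q in ball (s, σ s) r, ‖w q - w (s, σ s)‖ₑ ∂volume := by
  simp_rw [setLAverage_eq, volume_ball_prod_real]
  have hS : MeasurableSet {z : ℝ × (ℝ × ℝ) | dist z.2 (z.1, σ z.1) < r} :=
    measurableSet_lt (by fun_prop) measurable_const
  exact (Measurable.setLIntegral_prodMk_preimage
    (f := fun z : ℝ × (ℝ × ℝ) => ‖w z.2 - w (z.1, σ z.1)‖ₑ) (by fun_prop) hS).div_const _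

theorem lintegral_lintegral_lintegral_le_lintegral_ball (hw : Measurable w) {K : ℝ≥0}
    (hσ : LipschitzWith K σ) {I J : Set ℝ} (hI : MeasurableSet I) {δ : ℝ}
    (hIJ : ∀ t ∈ I, closedBall t δ ⊆ J) :
    ∫⁻ t in I, ∫⁻ x in ball (σ t) δ, ∫⁻ s in closedBall t δ, ‖w (t, x) - w (s, σ s)‖ₑ
      ≤ ∫⁻ s in J, ∫⁻ q in ball (s, σ s) ((K + 2) * δ), ‖w q - w (s, σ s)‖ₑ := by
  set G : ℝ × (ℝ × ℝ) → ℝ≥0∞ := fun z =>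
    (ball (z.1, σ z.1) ((K + 2) * δ)).indicator (fun q => ‖w q - w (z.1, σ z.1)‖ₑ) z.2
  have hσm : Measurable σ := hσ.continuous.measurable
  have hG : Measurable G := by
    have hS : MeasurableSet {z : ℝ × (ℝ × ℝ) | dist z.2 (z.1, σ z.1) < (K + 2) * δ} :=
      measurableSet_lt (by fun_prop) measurable_const
    exact Measurable.indicator (by fun_prop) hS
  calc _ ≤ ∫⁻ t, ∫⁻ x, ∫⁻ s in J, G (s, (t, x)) := by
        refine (setLIntegral_mono' hI fun t ht => ?_).trans (setLIntegral_le_lintegral _ _)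
        refine (setLIntegral_mono' measurableSet_ball fun x hx => ?_).trans
          (setLIntegral_le_lintegral _ _)
        refine (setLIntegral_mono' measurableSet_closedBall fun s hs => ?_).trans
          (lintegral_mono_set (hIJ t ht))
        exact (indicator_of_mem (hσ.mk_mem_ball_mk hs hx)
          (fun q => ‖w q - w (s, σ s)‖ₑ)).ge
    _ = ∫⁻ p : ℝ × ℝ, ∫⁻ s in J, G (s, p) := by
        rw [Measure.volume_eq_prod, lintegral_prod _ hG.lintegral_prod_left'.aemeasurable]
    _ = ∫⁻ s in J, ∫⁻ p, G (s, p) := lintegral_lintegral_swap (hG.comp measurable_swap).aemeasurable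
    _ = _ := by simp only [G, lintegral_indicator measurableSet_ball]

theorem lintegral_setLAverage_setLAverage_le (hw : Measurable w) {K : ℝ≥0}
    (hσ : LipschitzWith K σ) {I J : Set ℝ} (hI : MeasurableSet I) {δ : ℝ} (hδ : 0 < δ)
    (hIJ : ∀ t ∈ I, closedBall t δ ⊆ J) :
    ∫⁻ t in I, ⨍⁻ x in ball (σ t) δ, ⨍⁻ s in closedBall t δ,
        ‖w (t, x) - w (s, σ s)‖ₑ ∂volume ∂volume
      ≤ ENNReal.ofReal ((K + 2) ^ 2) *
        ∫⁻ s in J, ⨍⁻ q in ball (s, σ s) ((K + 2) * δ), ‖w q - w (s, σ s)‖ₑ ∂volume := by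
  have hm₀ : ENNReal.ofReal (2 * δ) ≠ 0 := by simp [hδ]
  have hc₀ : ENNReal.ofReal ((K + 2) ^ 2) ≠ 0 := by simp; positivity
  have hball : ∀ s, volume (ball (s, σ s) ((K + 2) * δ))
      = ENNReal.ofReal ((K + 2) ^ 2) * (ENNReal.ofReal (2 * δ) * ENNReal.ofReal (2 * δ)) := by
    intro s
    rw [volume_ball_prod_real, ← ENNReal.ofReal_mul (by positivity),
      ← ENNReal.ofReal_mul (by positivity), ← ENNReal.ofReal_mul (by positivity)]
    congr 1
    ring
  simp only [setLAverage_eq, Real.volume_ball, Real.volume_closedBall, hball, div_eq_mul_inv,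
    lintegral_mul_const' _ _ (ENNReal.inv_ne_top.2 hm₀),
    lintegral_mul_const' _ _ (ENNReal.inv_ne_top.2 (mul_ne_zero hc₀ (mul_ne_zero hm₀ hm₀)))]
  rw [ENNReal.mul_inv (.inl hc₀) (.inl ENNReal.ofReal_ne_top),
    ENNReal.mul_inv (.inl hm₀) (.inl ENNReal.ofReal_ne_top)]
  calc _ ≤ (∫⁻ s in J, ∫⁻ q in ball (s, σ s) ((K + 2) * δ), ‖w q - w (s, σ s)‖ₑ)
        * (ENNReal.ofReal (2 * δ))⁻¹ * (ENNReal.ofReal (2 * δ))⁻¹ := by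
        gcongr ?_ * _ * _
        exact lintegral_lintegral_lintegral_le_lintegral_ball hw hσ hI hIJ
    _ = _ := by
        rw [← one_mul (_ * _ * _), ← ENNReal.mul_inv_cancel hc₀ ENNReal.ofReal_ne_top]
        ring

theorem lintegral_enorm_sub_ball_le {C : ℝ} (hw : Measurable w) (hC : ∀ p, |w p| ≤ C)
    {K : ℝ≥0} (hσ : LipschitzWith K σ) (t₁ t₂ : ℝ) {δ : ℝ} (hδ : 0 < δ) :
    ∫⁻ t in Ioo t₁ t₂, ‖1 / δ‖ₑ * ∫⁻ x in ball (σ t) δ, ‖w (t, x) - w (t, σ t)‖ₑ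
      ≤ 2 * (ENNReal.ofReal ((K + 2) ^ 2) *
          ((∫⁻ s in Ioo t₁ t₂, ⨍⁻ q in ball (s, σ s) ((K + 2) * δ), ‖w q - w (s, σ s)‖ₑ ∂volume)
            + ENNReal.ofReal (2 * C) * ENNReal.ofReal (2 * δ))
        + ∫⁻ t in Ioo t₁ t₂, ⨍⁻ s in closedBall t δ, ‖w (s, σ s) - w (t, σ t)‖ₑ ∂volume) := by
  have hf : Measurable fun s => w (s, σ s) :=
    hw.comp (measurable_id.prodMk hσ.continuous.measurable)
  have hscale : ‖1 / δ‖ₑ * ENNReal.ofReal (2 * δ) = 2 := by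
    rw [Real.enorm_eq_ofReal (by positivity), ← ENNReal.ofReal_mul (by positivity)]
    field_simp
    simp
  have hpt : ∀ t, ‖1 / δ‖ₑ * ∫⁻ x in ball (σ t) δ, ‖w (t, x) - w (t, σ t)‖ₑ
      ≤ 2 * (⨍⁻ x in ball (σ t) δ, ⨍⁻ s in closedBall t δ, ‖w (t, x) - w (s, σ s)‖ₑ ∂volume ∂volume
        + ⨍⁻ s in closedBall t δ, ‖w (s, σ s) - w (t, σ t)‖ₑ ∂volume) := by
    intro t
    rw [← measure_mul_setLAverage _ measure_ball_lt_top.ne, Real.volume_ball, ← mul_assoc, hscale]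
    gcongr
    exact setLAverage_enorm_sub_le (by simp [hδ]) measure_ball_lt_top.ne (by simp [hδ])
      measure_closedBall_lt_top.ne _ hf _
  have hIJ : ∀ t ∈ Ioo t₁ t₂, closedBall t δ ⊆ Ioo (t₁ - δ) (t₂ + δ) := fun t ht => by
    rw [Real.closedBall_eq_Icc]
    exact Icc_subset_Ioo (by linarith [ht.1]) (by linarith [ht.2])
  calc _ ≤ ∫⁻ t in Ioo t₁ t₂, 2 * (⨍⁻ x in ball (σ t) δ, ⨍⁻ s in closedBall t δ,
          ‖w (t, x) - w (s, σ s)‖ₑ ∂volume ∂volume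
        + ⨍⁻ s in closedBall t δ, ‖w (s, σ s) - w (t, σ t)‖ₑ ∂volume) := lintegral_mono hpt
    _ = 2 * ((∫⁻ t in Ioo t₁ t₂, ⨍⁻ x in ball (σ t) δ, ⨍⁻ s in closedBall t δ,
          ‖w (t, x) - w (s, σ s)‖ₑ ∂volume ∂volume)
        + ∫⁻ t in Ioo t₁ t₂, ⨍⁻ s in closedBall t δ, ‖w (s, σ s) - w (t, σ t)‖ₑ ∂volume) := by
      rw [lintegral_const_mul' _ _ ENNReal.ofNat_ne_top,
        lintegral_add_right _ (measurable_setLAverage_closedBall hf δ)]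
    _ ≤ _ := by
      gcongr
      refine (lintegral_setLAverage_setLAverage_le hw hσ measurableSet_Ioo hδ hIJ).trans ?_
      gcongr
      exact setLIntegral_Ioo_sub_add_le (fun s => setLAverage_le_of_forall_le fun q =>
        enorm_sub_le_ofReal_two_mul (hC _) (hC _)) t₁ t₂ hδ.le

theorem tendsto_lintegral_enorm_sub_ball_of_lipschitzWith {C : ℝ} (hw : Measurable w)
    (hC : ∀ p, |w p| ≤ C) {K : ℝ≥0} (hσ : LipschitzWith K σ) (t₁ t₂ : ℝ)
    (hleb : ∀ᵐ t ∂volume.restrict (Ioo t₁ t₂),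
      Tendsto (fun r => ⨍⁻ q in ball (t, σ t) r, ‖w q - w (t, σ t)‖ₑ ∂volume) (𝓝[>] 0) (𝓝 0)) :
    Tendsto (fun δ => ∫⁻ t in Ioo t₁ t₂, ‖1 / δ‖ₑ * ∫⁻ x in ball (σ t) δ, ‖w (t, x) - w (t, σ t)‖ₑ)
      (𝓝[>] 0) (𝓝 0) := by
  have hσm : Measurable σ := hσ.continuous.measurable
  have hf : Measurable fun s => w (s, σ s) := hw.comp (measurable_id.prodMk hσm)
  have hf_loc : LocallyIntegrable (fun s => w (s, σ s)) volume :=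
    locallyIntegrable_of_abs_le hf.aestronglyMeasurable fun s => hC (s, σ s)
  have hbound : ∀ p q, ‖w p - w q‖ₑ ≤ ENNReal.ofReal (2 * C) := fun p q =>
    enorm_sub_le_ofReal_two_mul (hC p) (hC q)
  have hI : volume (Ioo t₁ t₂) ≠ ∞ := by simp [Real.volume_Ioo]
  have hscale : Tendsto (fun δ : ℝ => (K + 2 : ℝ) * δ) (𝓝[>] 0) (𝓝[>] 0) :=
    tendsto_iff_comap.2 (comap_mulLeft_nhdsGT_zero (by positivity)).ge
  have hball : Tendsto (fun δ => ∫⁻ s in Ioo t₁ t₂,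
      ⨍⁻ q in ball (s, σ s) ((K + 2) * δ), ‖w q - w (s, σ s)‖ₑ ∂volume) (𝓝[>] 0) (𝓝 0) :=
    tendsto_setLIntegral_zero_of_le_const hI ENNReal.ofReal_ne_top
      (.of_forall fun _ => measurable_setLAverage_ball_graph hw hσm _)
      (fun _ _ => setLAverage_le_of_forall_le fun _ => hbound _ _)
      (by filter_upwards [hleb] with s hs using hs.comp hscale)
  have hcurve : Tendsto (fun δ => ∫⁻ t in Ioo t₁ t₂,
      ⨍⁻ s in closedBall t δ, ‖w (s, σ s) - w (t, σ t)‖ₑ ∂volume) (𝓝[>] 0) (𝓝 0) :=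
    tendsto_setLIntegral_zero_of_le_const hI ENNReal.ofReal_ne_top
      (.of_forall fun _ => measurable_setLAverage_closedBall hf _)
      (fun _ _ => setLAverage_le_of_forall_le fun _ => hbound _ _)
      (ae_restrict_of_ae (IsUnifLocDoublingMeasure.ae_tendsto_setLAverage_enorm_sub hf_loc))
  have hlen : Tendsto (fun δ : ℝ => ENNReal.ofReal (2 * δ)) (𝓝[>] 0) (𝓝 0) := by
    simpa using (ENNReal.tendsto_ofReal ((continuous_const_mul 2).tendsto 0)).mono_left
      nhdsWithin_le_nhds
  refine tendsto_of_tendsto_of_tendsto_of_le_of_le' tendsto_const_nhds ?_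
    (.of_forall fun _ => zero_le) (by filter_upwards [self_mem_nhdsWithin] with δ hδ
      using lintegral_enorm_sub_ball_le hw hC hσ t₁ t₂ hδ)
  rw [show (0 : ℝ≥0∞) = 2 * (ENNReal.ofReal ((K + 2) ^ 2) * (0 + ENNReal.ofReal (2 * C) * 0) + 0)
    by simp]
  exact ENNReal.Tendsto.const_mul (.add (ENNReal.Tendsto.const_mul
    (hball.add (ENNReal.Tendsto.const_mul hlen (.inr ENNReal.ofReal_ne_top)))
    (.inr ENNReal.ofReal_ne_top)) hcurve) (.inr ENNReal.ofNat_ne_top)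

end Graph

theorem stmt_1_general (w : ℝ × ℝ → ℝ) (C : ℝ) (hmeas : Measurable w) (hbd : ∀ p, |w p| ≤ C)
    (t₁ t₂ : ℝ) (σ : ℝ → ℝ) (K : NNReal)
    (hσ : LipschitzOnWith K σ (Ioo t₁ t₂))
    (hleb : ∀ᵐ t ∂(volume.restrict (Ioo t₁ t₂)),
      Tendsto (fun r : ℝ => (volume (Metric.ball ((t, σ t) : ℝ × ℝ) r)).toReal⁻¹ *
        ∫ p in Metric.ball ((t, σ t) : ℝ × ℝ) r, |w p - w (t, σ t)|) (𝓝[>] 0) (𝓝 0)) :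
    Tendsto (fun δ : ℝ => ∫ t in Ioo t₁ t₂,
      (1 / δ) * ∫ x in Ioo (σ t - δ) (σ t + δ), |w (t, x) - w (t, σ t)|)
      (𝓝[>] 0) (𝓝 0) := by
  obtain ⟨g, hg, hσg⟩ := hσ.extend_real
  have hw_loc : LocallyIntegrable w volume :=
    locallyIntegrable_of_abs_le hmeas.aestronglyMeasurable hbd
  have hleb_g : ∀ᵐ t ∂volume.restrict (Ioo t₁ t₂),
      Tendsto (fun r => ⨍⁻ q in ball (t, g t) r, ‖w q - w (t, g t)‖ₑ ∂volume) (𝓝[>] 0) (𝓝 0) := by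
    filter_upwards [hleb, ae_restrict_mem measurableSet_Ioo] with t ht htI
    rw [← hσg htI]
    exact tendsto_setLAverage_enorm_sub_of_tendsto hw_loc ht
  rw [tendsto_zero_iff_enorm_tendsto_zero]
  refine tendsto_of_tendsto_of_tendsto_of_le_of_le' tendsto_const_nhds
    (tendsto_lintegral_enorm_sub_ball_of_lipschitzWith hmeas hbd hg t₁ t₂ hleb_g)
    (.of_forall fun _ => zero_le) (.of_forall fun δ => ?_)
  refine (enorm_integral_le_lintegral_enorm _).trans
    (setLIntegral_mono' measurableSet_Ioo fun t ht => ?_)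
  rw [enorm_mul, ← hσg ht, ← Real.ball_eq_Ioo]
  gcongr
  refine (enorm_integral_le_lintegral_enorm _).trans_eq ?_
  simp

/-- If (t, σ(t)) is a Lebesgue point of the bounded function w for a.e.
t ∈ (t₁,t₂), where σ is Lipschitz, then the averaged L¹ distance of w along
the curve vanishes. -/
theorem stmt_1 (w : ℝ × ℝ → ℝ) (C : ℝ) (hmeas : Measurable w) (hbd : ∀ p, |w p| ≤ C)
    (t₁ t₂ : ℝ) (ht : t₁ < t₂) (σ : ℝ → ℝ) (K : NNReal)
    (hσ : LipschitzOnWith K σ (Ioo t₁ t₂))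
    (hleb : ∀ᵐ t ∂(volume.restrict (Ioo t₁ t₂)),
      Tendsto (fun r : ℝ => (volume (Metric.ball ((t, σ t) : ℝ × ℝ) r)).toReal⁻¹ *
        ∫ p in Metric.ball ((t, σ t) : ℝ × ℝ) r, |w p - w (t, σ t)|) (𝓝[>] 0) (𝓝 0)) :
    Tendsto (fun δ : ℝ => ∫ t in Ioo t₁ t₂,
      (1 / δ) * ∫ x in Ioo (σ t - δ) (σ t + δ), |w (t, x) - w (t, σ t)|)
      (𝓝[>] 0) (𝓝 0) :=
  stmt_1_general w C hmeas hbd t₁ t₂ σ K hσ hleb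
end

section
/- Let u : (0,∞) × ℝ → ℝⁿ be bounded measurable, fix t̄ ≥ 0 and M > 0, and let ω be an L¹ modulus of continuity of u(t̄, ·) on [−M−1, M+1], i.e. ∫_{−M−1}^{M+1} |u(t̄,z) − u(t̄,z+δ)| dz ≤ ω(|δ|) with ω(s) → 0 as s → 0. Suppose that for almost every x̄ ∈ ℝ, lim_{r→0⁺} ∫₀¹ ∫_{−1}^{1} |u(t̄ + sr, x̄ + yr) − u(t̄, x̄)| dy ds = 0. Then lim_{r→0⁺} (1/r) ∫₀^r ∫_{−M}^{M} |u(t̄+s, x) − u(t̄, x)| dx ds = 0. -/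
open MeasureTheory Set Filter Topology

/-!
Rescaling time by `r` turns `(1/r) ∫₀^r ∫_{-M}^{M} |u(t̄+s,x) - u(t̄,x)|` into an average over
`σ ∈ (0,1]` of `∫_{-M}^{M} |u(t̄+σr,x) - u(t̄,x)|`. For every `y ∈ (-1,1]` the triangle inequality
through `u(t̄, x - yr)` and a translation bound this by
`∫_{-M-1}^{M+1} |u(t̄+σr, z+yr) - u(t̄,z)| dz + ω(|yr|)`. Averaging over `y` and `σ` and exchanging
the order of integration gives `(1/2) ∫_{-M-1}^{M+1} D(z,r) dz + sup_{0 < c ≤ r} ω(c)`, where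
`D(z,r) = rescaledDeviation u t̄ z r` is the integrand of the hypothesis at `z`. The first term
tends to zero by dominated convergence, the second because `ω(s) → 0`.
-/

lemma tendsto_zero_of_forall_eventually_le_add {α : Type*} {l : Filter α} {f g : α → ℝ}
    (hf : ∀ᶠ x in l, 0 ≤ f x) (hg : Tendsto g l (𝓝 0))
    (hfg : ∀ ε > 0, ∀ᶠ x in l, f x ≤ g x + ε) : Tendsto f l (𝓝 0) := by
  refine tendsto_order.2 ⟨fun a ha => hf.mono fun x hx => ha.trans_le hx, fun a ha => ?_⟩
  filter_upwards [hfg (a / 2) (half_pos ha), hg.eventually (gt_mem_nhds (half_pos ha))]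
    with x hfx hgx
  linarith

lemma eventually_forall_abs_le_le_of_le_modulus {F ω : ℝ → ℝ} (hF : ∀ c, F c ≤ ω |c|)
    (hF0 : F 0 = 0) (hω : Tendsto ω (𝓝[>] 0) (𝓝 0)) {ε : ℝ} (hε : 0 < ε) :
    ∀ᶠ r in 𝓝[>] 0, ∀ c, |c| ≤ r → F c ≤ ε := by
  obtain ⟨δ, hδ, hωδ⟩ := mem_nhdsGT_iff_exists_Ioo_subset.1 (hω (Iic_mem_nhds hε))
  filter_upwards [Ioo_mem_nhdsGT hδ] with r hr c hc
  rcases eq_or_ne c 0 with rfl | hc0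
  · rw [hF0]
    exact hε.le
  · exact (hF c).trans (hωδ ⟨abs_pos.2 hc0, hc.trans_lt hr.2⟩)

lemma setIntegral_Ioc_zero_one_comp_mul_right {E : Type*} [NormedAddCommGroup E]
    [NormedSpace ℝ E] (f : ℝ → E) {r : ℝ} (hr : 0 < r) :
    ∫ σ in Ioc (0 : ℝ) 1, f (σ * r) = r⁻¹ • ∫ s in Ioc (0 : ℝ) r, f s := by
  rw [← intervalIntegral.integral_of_le zero_le_one, ← intervalIntegral.integral_of_le hr.le,
    intervalIntegral.integral_comp_mul_right f hr.ne', zero_mul, one_mul]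

lemma setIntegral_Icc_comp_sub_le {F : ℝ → ℝ} {a b c : ℝ}
    (hF : IntegrableOn F (Icc (a - 1) (b + 1))) (hF0 : ∀ x, 0 ≤ F x) (hc : |c| ≤ 1) :
    ∫ x in Icc a b, F (x - c) ≤ ∫ z in Icc (a - 1) (b + 1), F z := by
  have htranslate : ∫ x in Icc a b, F (x - c) = ∫ z in Icc (a - c) (b - c), F z := by
    simpa [preimage_sub_const_Icc] using (measurePreserving_sub_right volume c)
      |>.setIntegral_preimage_emb (measurableEmbedding_subRight c) F (Icc (a - c) (b - c))
  obtain ⟨hc₁, hc₂⟩ := abs_le.1 hc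
  rw [htranslate]
  exact setIntegral_mono_set hF (ae_of_all _ hF0)
    (LE.le.eventuallyLE (Icc_subset_Icc (by linarith) (by linarith)))

section

variable {E : Type*} [NormedAddCommGroup E] {C : ℝ}

lemma norm_setIntegral_norm_sub_le {α : Type*} [MeasurableSpace α] {μ : Measure α} {s : Set α}
    (hs : μ s < ⊤) {F G : α → E} (hFC : ∀ p, ‖F p‖ ≤ C) (hGC : ∀ p, ‖G p‖ ≤ C) :
    ‖∫ p in s, ‖F p - G p‖ ∂μ‖ ≤ (C + C) * μ.real s :=
  norm_setIntegral_le_of_norm_le_const hs fun p _ =>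
    (norm_norm _).trans_le (norm_sub_le_of_le (hFC p) (hGC p))

noncomputable def rescaledDeviation (u : ℝ × ℝ → E) (t x r : ℝ) : ℝ :=
  ∫ s in Ioc (0 : ℝ) 1, ∫ y in Ioc (-1 : ℝ) 1, ‖u (t + s * r, x + y * r) - u (t, x)‖

variable {u : ℝ × ℝ → E}

lemma norm_rescaledDeviation_le (huC : ∀ p, ‖u p‖ ≤ C) (t x r : ℝ) :
    ‖rescaledDeviation u t x r‖ ≤ (C + C) * 2 := by
  have hJ : volume.real (Ioc (-1 : ℝ) 1) = 2 := by simp; norm_num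
  have hinner : ∀ s, ‖∫ y in Ioc (-1 : ℝ) 1, ‖u (t + s * r, x + y * r) - u (t, x)‖‖
      ≤ (C + C) * 2 :=
    fun s => hJ ▸ norm_setIntegral_norm_sub_le measure_Ioc_lt_top (fun _ => huC _) fun _ => huC _
  simpa [rescaledDeviation] using norm_setIntegral_le_of_norm_le_const (μ := volume)
    (s := Ioc (0 : ℝ) 1) measure_Ioc_lt_top fun s _ => hinner s

variable [MeasurableSpace E] [BorelSpace E] [SecondCountableTopology E]

lemma integrable_norm_sub_of_norm_le {α : Type*} [MeasurableSpace α] {μ : Measure α}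
    [IsFiniteMeasure μ] {F G : α → E} (hF : Measurable F) (hG : Measurable G)
    (hFC : ∀ p, ‖F p‖ ≤ C) (hGC : ∀ p, ‖G p‖ ≤ C) : Integrable (fun p => ‖F p - G p‖) μ :=
  Integrable.of_bound (hF.sub hG).norm.aestronglyMeasurable (C + C) <| ae_of_all _ fun p =>
    (norm_norm _).trans_le (norm_sub_le_of_le (hFC p) (hGC p))

lemma setIntegral_norm_sub_le_shift {g h : ℝ → E} (hg : Measurable g) (hh : Measurable h)
    (hgC : ∀ x, ‖g x‖ ≤ C) (hhC : ∀ x, ‖h x‖ ≤ C) {a b c : ℝ} (hc : |c| ≤ 1) :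
    ∫ x in Icc a b, ‖g x - h x‖ ≤ (∫ z in Icc (a - 1) (b + 1), ‖g (z + c) - h z‖)
      + ∫ z in Icc (a - 1) (b + 1), ‖h z - h (z + c)‖ := by
  have hhc : Measurable fun x => h (x - c) := by fun_prop
  calc ∫ x in Icc a b, ‖g x - h x‖
      ≤ ∫ x in Icc a b, (‖g x - h (x - c)‖ + ‖h (x - c) - h x‖) :=
        integral_mono (integrable_norm_sub_of_norm_le hg hh hgC hhC)
          ((integrable_norm_sub_of_norm_le hg hhc hgC fun _ => hhC _).add
            (integrable_norm_sub_of_norm_le hhc hh (fun _ => hhC _) hhC))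
          fun x => norm_sub_le_norm_sub_add_norm_sub _ _ _
    _ = (∫ x in Icc a b, ‖g x - h (x - c)‖) + ∫ x in Icc a b, ‖h (x - c) - h x‖ :=
        integral_add (integrable_norm_sub_of_norm_le hg hhc hgC fun _ => hhC _)
          (integrable_norm_sub_of_norm_le hhc hh (fun _ => hhC _) hhC)
    _ ≤ _ := by
      gcongr ?_ + ?_
      · simpa using setIntegral_Icc_comp_sub_le (F := fun z => ‖g (z + c) - h z‖)
          (integrable_norm_sub_of_norm_le (by fun_prop) hh (fun _ => hgC _) hhC)
          (fun _ => norm_nonneg _) hc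
      · simpa using setIntegral_Icc_comp_sub_le (F := fun z => ‖h z - h (z + c)‖)
          (integrable_norm_sub_of_norm_le hh (by fun_prop) hhC fun _ => hhC _)
          (fun _ => norm_nonneg _) hc

lemma setIntegral_norm_sub_le_average_shift {g h : ℝ → E} (hg : Measurable g)
    (hh : Measurable h) (hgC : ∀ x, ‖g x‖ ≤ C) (hhC : ∀ x, ‖h x‖ ≤ C) {a b r η : ℝ}
    (hr₀ : 0 ≤ r) (hr₁ : r ≤ 1)
    (hη : ∀ c, |c| ≤ r → ∫ z in Icc (a - 1) (b + 1), ‖h z - h (z + c)‖ ≤ η) :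
    ∫ x in Icc a b, ‖g x - h x‖
      ≤ 1 / 2 * (∫ z in Icc (a - 1) (b + 1), ∫ y in Ioc (-1 : ℝ) 1, ‖g (z + y * r) - h z‖) + η := by
  set S := Icc (a - 1) (b + 1)
  set J := Ioc (-1 : ℝ) 1
  have hprod : Integrable (Function.uncurry fun y z => ‖g (z + y * r) - h z‖)
      ((volume.restrict J).prod (volume.restrict S)) :=
    integrable_norm_sub_of_norm_le (F := fun p : ℝ × ℝ => g (p.2 + p.1 * r))
      (G := fun p => h p.2) (by fun_prop) (by fun_prop) (fun _ => hgC _) (fun _ => hhC _)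
  have hinner : Integrable (fun y => ∫ z in S, ‖g (z + y * r) - h z‖) (volume.restrict J) :=
    hprod.integral_prod_left
  have hshift : ∀ y ∈ J, ∫ x in Icc a b, ‖g x - h x‖
      ≤ (∫ z in S, ‖g (z + y * r) - h z‖) + η := by
    intro y hy
    have hyr : |y * r| ≤ r := by
      rw [abs_mul, abs_of_nonneg hr₀]
      exact mul_le_of_le_one_left hr₀ (abs_le.2 ⟨hy.1.le, hy.2⟩)
    exact (setIntegral_norm_sub_le_shift hg hh hgC hhC (hyr.trans hr₁)).trans
      (add_le_add le_rfl (hη _ hyr))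
  have hJ : volume.real J = 2 := by simp [J]; norm_num
  have hav : 2 * ∫ x in Icc a b, ‖g x - h x‖
      ≤ (∫ y in J, ∫ z in S, ‖g (z + y * r) - h z‖) + 2 * η := by
    calc 2 * ∫ x in Icc a b, ‖g x - h x‖ = ∫ _ in J, ∫ x in Icc a b, ‖g x - h x‖ := by
          rw [setIntegral_const, hJ, smul_eq_mul]
      _ ≤ ∫ y in J, ((∫ z in S, ‖g (z + y * r) - h z‖) + η) :=
          setIntegral_mono_on (integrableOn_const measure_Ioc_lt_top.ne)
            (hinner.add (integrable_const η)) measurableSet_Ioc hshift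
      _ = (∫ y in J, ∫ z in S, ‖g (z + y * r) - h z‖) + 2 * η := by
          rw [integral_add hinner (integrable_const η), setIntegral_const, hJ, smul_eq_mul]
  rw [integral_integral_swap hprod] at hav
  linarith

lemma stronglyMeasurable_rescaledDeviation (hu : Measurable u) (t r : ℝ) :
    StronglyMeasurable fun x => rescaledDeviation u t x r :=
  StronglyMeasurable.integral_prod_right'
    (f := fun p : ℝ × ℝ => ∫ y in Ioc (-1 : ℝ) 1, ‖u (t + p.2 * r, p.1 + y * r) - u (t, p.1)‖)
    (StronglyMeasurable.integral_prod_right'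
      (f := fun q : (ℝ × ℝ) × ℝ => ‖u (t + q.1.2 * r, q.1.1 + q.2 * r) - u (t, q.1.1)‖)
      (by fun_prop : Measurable _).stronglyMeasurable)

lemma tendsto_setIntegral_rescaledDeviation (hu : Measurable u) (huC : ∀ p, ‖u p‖ ≤ C)
    {t : ℝ} {s : Set ℝ} (hs : volume s ≠ ⊤)
    (h : ∀ᵐ x, Tendsto (rescaledDeviation u t x) (𝓝[>] 0) (𝓝 0)) :
    Tendsto (fun r => ∫ x in s, rescaledDeviation u t x r) (𝓝[>] 0) (𝓝 0) := by
  simpa using tendsto_integral_filter_of_dominated_convergence (μ := volume.restrict s)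
    (fun _ => (C + C) * 2)
    (Eventually.of_forall fun r =>
      (stronglyMeasurable_rescaledDeviation hu t r).aestronglyMeasurable)
    (Eventually.of_forall fun r => ae_of_all _ fun x => norm_rescaledDeviation_le huC t x r)
    (integrableOn_const hs) (ae_restrict_of_ae h)

lemma one_div_mul_setIntegral_norm_sub_le (hu : Measurable u) (huC : ∀ p, ‖u p‖ ≤ C)
    {t a b r η : ℝ} (hr₀ : 0 < r) (hr₁ : r ≤ 1)
    (hη : ∀ c, |c| ≤ r → ∫ z in Icc (a - 1) (b + 1), ‖u (t, z) - u (t, z + c)‖ ≤ η) :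
    1 / r * ∫ s in Ioc (0 : ℝ) r, ∫ x in Icc a b, ‖u (t + s, x) - u (t, x)‖
      ≤ 1 / 2 * (∫ z in Icc (a - 1) (b + 1), rescaledDeviation u t z r) + η := by
  set S := Icc (a - 1) (b + 1)
  set T := Ioc (0 : ℝ) 1
  set J := Ioc (-1 : ℝ) 1
  have hprod : Integrable
      (Function.uncurry fun σ z => ∫ y in J, ‖u (t + σ * r, z + y * r) - u (t, z)‖)
      ((volume.restrict T).prod (volume.restrict S)) :=
    Integrable.of_bound (StronglyMeasurable.integral_prod_right'
      (f := fun q : (ℝ × ℝ) × ℝ => ‖u (t + q.1.1 * r, q.1.2 + q.2 * r) - u (t, q.1.2)‖)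
      (by fun_prop : Measurable _).stronglyMeasurable).aestronglyMeasurable _ <| ae_of_all _
      fun _ => norm_setIntegral_norm_sub_le measure_Ioc_lt_top (fun _ => huC _) fun _ => huC _
  have hslice : Integrable (fun σ => ∫ x in Icc a b, ‖u (t + σ * r, x) - u (t, x)‖)
      (volume.restrict T) :=
    (integrable_norm_sub_of_norm_le (μ := (volume.restrict T).prod (volume.restrict (Icc a b)))
      (F := fun p => u (t + p.1 * r, p.2)) (G := fun p => u (t, p.2)) (by fun_prop)
      (by fun_prop) (fun _ => huC _) fun _ => huC _).integral_prod_left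
  have hiter : Integrable
      (fun σ => ∫ z in S, ∫ y in J, ‖u (t + σ * r, z + y * r) - u (t, z)‖) (volume.restrict T) :=
    hprod.integral_prod_left
  calc 1 / r * ∫ s in Ioc (0 : ℝ) r, ∫ x in Icc a b, ‖u (t + s, x) - u (t, x)‖
      = ∫ σ in T, ∫ x in Icc a b, ‖u (t + σ * r, x) - u (t, x)‖ := by
        rw [setIntegral_Ioc_zero_one_comp_mul_right
          (fun s => ∫ x in Icc a b, ‖u (t + s, x) - u (t, x)‖) hr₀, smul_eq_mul, one_div]
    _ ≤ ∫ σ in T, (1 / 2 * (∫ z in S, ∫ y in J, ‖u (t + σ * r, z + y * r) - u (t, z)‖) + η) :=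
        integral_mono hslice ((hiter.const_mul _).add (integrable_const η))
          fun σ => setIntegral_norm_sub_le_average_shift (by fun_prop) (by fun_prop)
            (fun _ => huC _) (fun _ => huC _) hr₀.le hr₁ hη
    _ = 1 / 2 * (∫ σ in T, ∫ z in S, ∫ y in J, ‖u (t + σ * r, z + y * r) - u (t, z)‖) + η := by
        rw [integral_add (hiter.const_mul _) (integrable_const η),
          integral_const_mul, setIntegral_const]
        simp [T]
    _ = 1 / 2 * (∫ z in S, rescaledDeviation u t z r) + η := by
        rw [integral_integral_swap hprod]
        rfl

end

theorem stmt_4_general (n : ℕ) (u : ℝ × ℝ → EuclideanSpace ℝ (Fin n)) (C : ℝ)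
    (hmeas : Measurable u) (hbd : ∀ p, ‖u p‖ ≤ C)
    (tb : ℝ) (M : ℝ)
    (ω : ℝ → ℝ)
    (hω : ∀ δ : ℝ, ∫ z in Icc (-M - 1) (M + 1), ‖u (tb, z) - u (tb, z + δ)‖ ≤ ω |δ|)
    (hω0 : Tendsto ω (𝓝[>] 0) (𝓝 0))
    (hres : ∀ᵐ xb : ℝ, Tendsto (fun r : ℝ =>
      ∫ s in Ioc (0 : ℝ) 1, ∫ y in Ioc (-1 : ℝ) 1, ‖u (tb + s * r, xb + y * r) - u (tb, xb)‖)
      (𝓝[>] 0) (𝓝 0)) :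
    Tendsto (fun r : ℝ =>
      (1 / r) * ∫ s in Ioc (0 : ℝ) r, ∫ x in Icc (-M) M, ‖u (tb + s, x) - u (tb, x)‖)
      (𝓝[>] 0) (𝓝 0) := by
  refine tendsto_zero_of_forall_eventually_le_add
    (g := fun r => 1 / 2 * ∫ z in Icc (-M - 1) (M + 1), rescaledDeviation u tb z r) ?_ ?_ ?_
  · filter_upwards [self_mem_nhdsWithin] with r (hr : 0 < r)
    exact mul_nonneg (by positivity)
      (integral_nonneg fun s => integral_nonneg fun x => norm_nonneg _)
  · simpa using
      (tendsto_setIntegral_rescaledDeviation hmeas hbd measure_Icc_lt_top.ne hres).const_mul (1 / 2 : ℝ)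
  · intro ε hε
    filter_upwards [eventually_forall_abs_le_le_of_le_modulus hω (by simp) hω0 hε,
      Ioc_mem_nhdsGT one_pos] with r hη hr
    exact one_div_mul_setIntegral_norm_sub_le hmeas hbd hr.1 hr.2 hη

/-- From a.e. convergence of parabolic rescalings and an L¹ modulus of continuity
at time t̄, deduce strong L¹ convergence of time averages on [-M, M]. -/
theorem stmt_4 (n : ℕ) (u : ℝ × ℝ → EuclideanSpace ℝ (Fin n)) (C : ℝ)
    (hmeas : Measurable u) (hbd : ∀ p, ‖u p‖ ≤ C)
    (tb : ℝ) (htb : 0 ≤ tb) (M : ℝ) (hM : 0 < M)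
    (ω : ℝ → ℝ)
    (hω : ∀ δ : ℝ, ∫ z in Icc (-M - 1) (M + 1), ‖u (tb, z) - u (tb, z + δ)‖ ≤ ω |δ|)
    (hω0 : Tendsto ω (𝓝[>] 0) (𝓝 0))
    (hres : ∀ᵐ xb : ℝ, Tendsto (fun r : ℝ =>
      ∫ s in Ioc (0 : ℝ) 1, ∫ y in Ioc (-1 : ℝ) 1, ‖u (tb + s * r, xb + y * r) - u (tb, xb)‖)
      (𝓝[>] 0) (𝓝 0)) :
    Tendsto (fun r : ℝ =>
      (1 / r) * ∫ s in Ioc (0 : ℝ) r, ∫ x in Icc (-M) M, ‖u (tb + s, x) - u (tb, x)‖)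
      (𝓝[>] 0) (𝓝 0) :=
  stmt_4_general n u C hmeas hbd tb M ω hω hω0 hres
end

section
/- Let μ_η be a locally finite signed measure on (0,∞) × ℝ equal in distributions to ∂_t η(u) + ∂_x q(u), where η, q are Lipschitz and u ∈ L^∞((0,∞) × ℝ; ℝ²) satisfies u ∈ C⁰((0,∞); L¹_loc(ℝ)). Then for every t̄ > 0, |μ_η|({t = t̄}) = 0. -/
/-!
Test the identity `μp - μm = ∂ₜ η(u) + ∂ₓ q(u)` against `φ(t, x) = κ((t - t̄) / ε) ψ(x)`, where
`κ` is a smooth bump with `κ 0 = 1` supported in `[-1, 1]`. As `ε → 0⁺`, the left-hand side tends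
to `∫_{t = t̄} ψ d(μp - μm)` by dominated convergence. On the right-hand side the flux term is
supported in a strip of Lebesgue measure `O(ε)`, and the time-derivative term equals
`∫ κ'(s) G(t̄ + ε s) ds` with `G(t) = ∫ ψ(x) η(u(t, x)) dx`. Strong time continuity of `u` and the
Lipschitz bound on `η` make `G` continuous at `t̄`, so this tends to `G(t̄) ∫ κ' = 0`. Hence the
restrictions of `μp` and `μm` to the slice `{t = t̄}` coincide, and since they are mutually
singular, both vanish.
-/

open MeasureTheory Set Filter Topology Metric
open scoped Manifold ContDiff

section SmoothTestFunctions

variable {E : Type*} [NormedAddCommGroup E] [NormedSpace ℝ E] [FiniteDimensional ℝ E]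

theorem exists_contDiff_eqOn_one_tsupport_subset {K U : Set E} (hK : IsCompact K)
    (hU : IsOpen U) (hKU : K ⊆ U) :
    ∃ f : E → ℝ, ContDiff ℝ ∞ f ∧ HasCompactSupport f ∧ EqOn f 1 K ∧ tsupport f ⊆ U ∧
      ∀ x, f x ∈ Icc 0 1 := by
  obtain ⟨L, hLc, hKL, hLU⟩ := exists_compact_between hK hU hKU
  obtain ⟨f, hf0, hf1, hf01⟩ := exists_contMDiffMap_zero_one_of_isClosed (n := ⊤) 𝓘(ℝ, E)
    isOpen_interior.isClosed_compl hK.isClosed (disjoint_compl_left_iff.2 hKL)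
  have hfL : tsupport f ⊆ L :=
    closure_minimal (fun x hx => by_contra fun hxL => hx (hf0 fun hxi =>
      hxL (interior_subset hxi))) hLc.isClosed
  exact ⟨f, contMDiff_iff_contDiff.1 f.contMDiff,
    hLc.of_isClosed_subset (isClosed_tsupport f) hfL, hf1, hfL.trans hLU, hf01⟩

variable [MeasurableSpace E] [BorelSpace E]

theorem measure_le_of_integral_contDiff_eq {μ ν : Measure E} [IsFiniteMeasureOnCompacts μ]
    [IsFiniteMeasureOnCompacts ν]
    (h : ∀ f : E → ℝ, ContDiff ℝ ∞ f → HasCompactSupport f → ∫ x, f x ∂μ = ∫ x, f x ∂ν)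
    {K U : Set E} (hK : IsCompact K) (hU : IsOpen U) (hKU : K ⊆ U) : μ K ≤ ν U := by
  obtain ⟨f, hf, hfc, hfK, hfU, hf01⟩ := exists_contDiff_eqOn_one_tsupport_subset hK hU hKU
  calc μ K ≤ ENNReal.ofReal (∫ x, f x ∂μ) :=
        (hf.continuous.integrable_of_hasCompactSupport hfc).measure_le_integral
          (ae_of_all _ fun x => (hf01 x).1) fun x hx => (hfK hx).ge
    _ = ENNReal.ofReal (∫ x, f x ∂ν) := by rw [h f hf hfc]
    _ ≤ ν U := integral_le_measure (fun x _ => (hf01 x).2)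
        fun x hx => (image_eq_zero_of_notMem_tsupport fun h => hx (hfU h)).le

theorem MeasureTheory.Measure.ext_of_integral_contDiff_eq {μ ν : Measure E}
    [IsLocallyFiniteMeasure μ] [IsLocallyFiniteMeasure ν]
    (h : ∀ f : E → ℝ, ContDiff ℝ ∞ f → HasCompactSupport f → ∫ x, f x ∂μ = ∫ x, f x ∂ν) :
    μ = ν := by
  have hle : ∀ (μ ν : Measure E) [IsLocallyFiniteMeasure μ] [IsLocallyFiniteMeasure ν],
      (∀ f : E → ℝ, ContDiff ℝ ∞ f → HasCompactSupport f → ∫ x, f x ∂μ = ∫ x, f x ∂ν) →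
      ∀ U, IsOpen U → μ U ≤ ν U := fun μ ν _ _ h U hU => by
    rw [hU.measure_eq_iSup_isCompact μ]
    exact iSup₂_le fun K hKU => iSup_le fun hK => measure_le_of_integral_contDiff_eq h hK hU hKU
  exact Measure.OuterRegular.ext_isOpen fun U hU =>
    le_antisymm (hle μ ν h U hU) (hle ν μ (fun f hf hfc => (h f hf hfc).symm) U hU)

end SmoothTestFunctions

theorem MeasureTheory.Measure.MutuallySingular.measure_eq_zero_of_restrict_eq {α : Type*}
    [MeasurableSpace α] {μ ν : Measure α} (h : μ ⟂ₘ ν) {s : Set α}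
    (hs : μ.restrict s = ν.restrict s) : μ s = 0 := by
  have hself : μ.restrict s ⟂ₘ μ.restrict s := by
    simpa only [hs] using (h.restrict s).symm.restrict s |>.symm
  simpa using congrArg (· univ) ((Measure.MutuallySingular.self_iff _).1 hself)

theorem LipschitzWith.norm_le_add_mul {E F : Type*} [SeminormedAddCommGroup E]
    [SeminormedAddCommGroup F] {K : NNReal} {f : E → F} (hf : LipschitzWith K f) {x : E} {C : ℝ}
    (hx : ‖x‖ ≤ C) : ‖f x‖ ≤ ‖f 0‖ + K * C :=
  calc ‖f x‖ ≤ ‖f 0‖ + ‖f x - f 0‖ := norm_le_insert' _ _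
    _ ≤ ‖f 0‖ + K * C := by
        gcongr
        simpa using (hf.norm_sub_le x 0).trans
          (mul_le_mul_of_nonneg_left (by simpa using hx) K.coe_nonneg)

theorem LipschitzWith.tendsto_integral_norm_comp_sub {α ι E F : Type*} [MeasurableSpace α]
    {μ : Measure α} [SeminormedAddCommGroup E] [SeminormedAddCommGroup F] {K : NNReal}
    {f : E → F} (hf : LipschitzWith K f) {l : Filter ι} {v : ι → α → E} {w : α → E}
    (hv : ∀ i, Integrable (fun x => ‖v i x - w x‖) μ)
    (h : Tendsto (fun i => ∫ x, ‖v i x - w x‖ ∂μ) l (𝓝 0)) :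
    Tendsto (fun i => ∫ x, ‖f (v i x) - f (w x)‖ ∂μ) l (𝓝 0) := by
  refine squeeze_zero (fun i => integral_nonneg fun x => norm_nonneg _) (fun i => ?_)
    (by simpa using h.const_mul (K : ℝ))
  rw [← integral_const_mul]
  exact integral_mono_of_nonneg (ae_of_all _ fun x => norm_nonneg _) ((hv i).const_mul _)
    (ae_of_all _ fun x => hf.norm_sub_le _ _)

theorem integrable_norm_sub_of_norm_le_s8 {α E : Type*} [MeasurableSpace α] {μ : Measure α}
    [IsFiniteMeasure μ] [NormedAddCommGroup E] [MeasurableSpace E] [BorelSpace E]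
    [SecondCountableTopology E] {f g : α → E} (hf : Measurable f) (hg : Measurable g) {C : ℝ}
    (hfC : ∀ x, ‖f x‖ ≤ C) (hgC : ∀ x, ‖g x‖ ≤ C) : Integrable (fun x => ‖f x - g x‖) μ :=
  Integrable.of_bound (hf.sub hg).norm.aestronglyMeasurable (C + C) <| ae_of_all _ fun x => by
    rw [norm_norm]
    exact (norm_sub_le _ _).trans (add_le_add (hfC x) (hgC x))

theorem continuousAt_integral_mul_of_tendsto_setIntegral_norm_sub {a : ℝ × ℝ → ℝ}
    (ha : Measurable a) {c : ℝ} (hac : ∀ p, ‖a p‖ ≤ c) {ψ : ℝ → ℝ} (hψ : Continuous ψ) {M : ℝ}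
    (hψM : tsupport ψ ⊆ Icc (-M) M) {t₀ : ℝ}
    (h : Tendsto (fun s => ∫ x in Icc (-M) M, ‖a (s, x) - a (t₀, x)‖) (𝓝 t₀) (𝓝 0)) :
    ContinuousAt (fun t => ∫ x, ψ x * a (t, x)) t₀ := by
  have hψc : HasCompactSupport ψ := isCompact_Icc.of_isClosed_subset (isClosed_tsupport ψ) hψM
  obtain ⟨Cψ, hCψ⟩ := hψc.exists_bound_of_continuous hψ
  have ham : ∀ t, Measurable fun x => a (t, x) := fun t => ha.comp measurable_prodMk_left
  have hint : ∀ t, Integrable fun x => ψ x * a (t, x) := fun t =>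
    (hψ.integrable_of_hasCompactSupport hψc).mul_bdd (ham t).aestronglyMeasurable
      (ae_of_all _ fun x => hac _)
  have hdiff : ∀ s, ‖(∫ x, ψ x * a (s, x)) - ∫ x, ψ x * a (t₀, x)‖ ≤
      Cψ * ∫ x in Icc (-M) M, ‖a (s, x) - a (t₀, x)‖ := by
    intro s
    rw [← integral_sub (hint s) (hint t₀), ← integral_const_mul,
      ← setIntegral_eq_integral_of_forall_compl_eq_zero (s := Icc (-M) M) fun x hx => by
        rw [image_eq_zero_of_notMem_tsupport fun h => hx (hψM h), zero_mul, zero_mul, sub_zero]]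
    refine norm_integral_le_of_norm_le (Integrable.const_mul ?_ _) (ae_of_all _ fun x => ?_)
    · exact integrable_norm_sub_of_norm_le_s8 (ham s) (ham t₀) (fun x => hac _) fun x => hac _
    · rw [← mul_sub, norm_mul]
      exact mul_le_mul_of_nonneg_right (hCψ x) (norm_nonneg _)
  exact tendsto_iff_norm_sub_tendsto_zero.2
    (squeeze_zero (fun _ => norm_nonneg _) hdiff (by simpa using h.const_mul Cψ))

theorem comp_sub_div_eq_zero {β : ℝ → ℝ} (hβ : tsupport β ⊆ closedBall 0 1) {t₀ ε t : ℝ}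
    (hε : 0 < ε) (ht : t ∉ closedBall t₀ ε) : β ((t - t₀) / ε) = 0 :=
  image_eq_zero_of_notMem_tsupport fun h => ht <| by
    have h1 := hβ h
    rw [mem_closedBall_zero_iff, Real.norm_eq_abs, abs_div, abs_of_pos hε, div_le_one hε] at h1
    rwa [mem_closedBall, Real.dist_eq]

theorem tsupport_comp_sub_div_subset {β : ℝ → ℝ} (hβ : tsupport β ⊆ closedBall 0 1) {t₀ ε : ℝ}
    (hε : 0 < ε) : tsupport (fun t => β ((t - t₀) / ε)) ⊆ closedBall t₀ ε :=
  closure_minimal (Function.support_subset_iff'.2 fun _ ht => comp_sub_div_eq_zero hβ hε ht)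
    isClosed_closedBall

theorem tendsto_integral_comp_sub_div_mul {μ : Measure (ℝ × ℝ)} [IsFiniteMeasureOnCompacts μ]
    {β : ℝ → ℝ} (hβ : Continuous β) (hβs : tsupport β ⊆ closedBall 0 1) {F : ℝ × ℝ → ℝ}
    (hFm : AEStronglyMeasurable F μ) {c : ℝ} (hFc : ∀ p, ‖F p‖ ≤ c) {K : Set ℝ}
    (hK : IsCompact K) (hFK : ∀ p : ℝ × ℝ, p.2 ∉ K → F p = 0) (t₀ : ℝ) :
    Tendsto (fun ε => ∫ p, β ((p.1 - t₀) / ε) * F p ∂μ) (𝓝[>] 0)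
      (𝓝 (β 0 * ∫ p in {p : ℝ × ℝ | p.1 = t₀}, F p ∂μ)) := by
  obtain ⟨Cβ, hCβ⟩ : ∃ C, ∀ y, ‖β y‖ ≤ C := HasCompactSupport.exists_bound_of_continuous
    ((isCompact_closedBall 0 1).of_isClosed_subset (isClosed_tsupport β) hβs) hβ
  have hbox : IsCompact (closedBall t₀ 1 ×ˢ K) := (isCompact_closedBall t₀ 1).prod hK
  rw [← integral_const_mul,
    ← integral_indicator (measurableSet_eq_fun measurable_fst measurable_const)]
  refine tendsto_integral_filter_of_dominated_convergence
    ((closedBall t₀ 1 ×ˢ K).indicator fun _ => Cβ * c)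
    (Eventually.of_forall fun ε =>
      (hβ.comp ((continuous_fst.sub continuous_const).div_const ε)).aestronglyMeasurable.mul hFm)
    ?_ ((integrable_indicator_iff hbox.measurableSet).2 (integrableOn_const hbox.measure_lt_top.ne))
    (ae_of_all _ fun p => ?_)
  · filter_upwards [Ioc_mem_nhdsGT one_pos] with ε hε
    refine ae_of_all _ fun p => ?_
    by_cases hp : p ∈ closedBall t₀ 1 ×ˢ K
    · rw [indicator_of_mem hp, norm_mul]
      exact mul_le_mul (hCβ _) (hFc p) (norm_nonneg _) ((norm_nonneg _).trans (hCβ 0))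
    · rw [indicator_of_notMem hp]
      rcases not_and_or.1 (mem_prod.not.1 hp) with h | h
      · rw [comp_sub_div_eq_zero hβs hε.1 fun h' => h (closedBall_subset_closedBall hε.2 h'),
          zero_mul, norm_zero]
      · simp [hFK p h]
  · by_cases hp : p.1 = t₀
    · simp [hp]
    · rw [indicator_of_notMem (show p ∉ {p : ℝ × ℝ | p.1 = t₀} from hp)]
      refine tendsto_const_nhds.congr' ?_
      filter_upwards [Ioo_mem_nhdsGT (dist_pos.2 hp)] with ε hε
      rw [comp_sub_div_eq_zero hβs hε.1 (not_le.2 hε.2), zero_mul]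

theorem volume_setOf_fst_eq (t₀ : ℝ) : volume {p : ℝ × ℝ | p.1 = t₀} = 0 := by
  rw [show {p : ℝ × ℝ | p.1 = t₀} = {t₀} ×ˢ univ by ext; simp, Measure.volume_eq_prod,
    Measure.prod_prod, Real.volume_singleton, zero_mul]

theorem tendsto_integral_comp_sub_div_mul_of_volume {β : ℝ → ℝ} (hβ : Continuous β)
    (hβs : tsupport β ⊆ closedBall 0 1) {F : ℝ × ℝ → ℝ} (hFm : AEStronglyMeasurable F)
    {c : ℝ} (hFc : ∀ p, ‖F p‖ ≤ c) {K : Set ℝ} (hK : IsCompact K)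
    (hFK : ∀ p : ℝ × ℝ, p.2 ∉ K → F p = 0) (t₀ : ℝ) :
    Tendsto (fun ε => ∫ p, β ((p.1 - t₀) / ε) * F p) (𝓝[>] 0) (𝓝 0) := by
  have h := tendsto_integral_comp_sub_div_mul hβ hβs hFm hFc hK hFK t₀
  rwa [Measure.restrict_eq_zero.2 (volume_setOf_fst_eq t₀), integral_zero_measure,
    mul_zero] at h

theorem integral_comp_sub_div_div_mul (f G : ℝ → ℝ) (t₀ : ℝ) {ε : ℝ} (hε : 0 < ε) :
    ∫ t, f ((t - t₀) / ε) / ε * G t = ∫ s, f s * G (t₀ + ε * s) := by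
  set g : ℝ → ℝ := fun y => f (y / ε) * G (t₀ + y)
  calc ∫ t, f ((t - t₀) / ε) / ε * G t = ε⁻¹ * ∫ t, g (t - t₀) := by
        rw [← integral_const_mul]
        congr 1 with t
        simp only [g, add_sub_cancel]
        ring
    _ = ∫ s, g (ε * s) := by
        rw [Measure.integral_comp_mul_left, integral_sub_right_eq_self, abs_inv, abs_of_pos hε,
          smul_eq_mul]
    _ = ∫ s, f s * G (t₀ + ε * s) := by simp only [g, mul_div_cancel_left₀ _ hε.ne']

theorem tendsto_integral_deriv_comp_sub_div_mul {β : ℝ → ℝ} (hβ : ContDiff ℝ 1 β)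
    (hβc : HasCompactSupport β) {G : ℝ → ℝ} (hGm : Measurable G) {c : ℝ} (hGc : ∀ t, ‖G t‖ ≤ c)
    {t₀ : ℝ} (hG : ContinuousAt G t₀) :
    Tendsto (fun ε => ∫ t, deriv β ((t - t₀) / ε) / ε * G t) (𝓝[>] 0) (𝓝 0) := by
  have hβ' : Continuous (deriv β) := hβ.continuous_deriv le_rfl
  have hβ'i : Integrable (deriv β) := hβ'.integrable_of_hasCompactSupport hβc.deriv
  have hmean : ∫ s, deriv β s = 0 :=
    integral_eq_zero_of_hasDerivAt_of_integrable
      (fun s => (hβ.differentiable one_ne_zero s).hasDerivAt) hβ'i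
      (hβ.continuous.integrable_of_hasCompactSupport hβc)
  have hlim : Tendsto (fun ε => ∫ s, deriv β s * G (t₀ + ε * s)) (𝓝[>] 0)
      (𝓝 (∫ s, deriv β s * G t₀)) := by
    refine tendsto_integral_filter_of_dominated_convergence (fun s => ‖deriv β s‖ * c)
      (Eventually.of_forall fun ε => hβ'.aestronglyMeasurable.mul
        (hGm.comp (measurable_const.add (measurable_const.mul measurable_id))).aestronglyMeasurable)
      (Eventually.of_forall fun ε => ae_of_all _ fun s => ?_) (hβ'i.norm.mul_const c)
      (ae_of_all _ fun s => tendsto_const_nhds.mul (hG.tendsto.comp ?_))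
    · rw [norm_mul]
      exact mul_le_mul_of_nonneg_left (hGc _) (norm_nonneg _)
    · refine tendsto_nhdsWithin_of_tendsto_nhds ?_
      exact (by fun_prop : Continuous fun ε : ℝ => t₀ + ε * s).tendsto' 0 t₀ (by simp)
  rw [integral_mul_const, hmean, zero_mul] at hlim
  exact hlim.congr' (eventually_mem_nhdsWithin.mono fun ε hε =>
    (integral_comp_sub_div_div_mul _ G t₀ hε).symm)

theorem tendsto_integral_deriv_comp_sub_div_mul_integral {β : ℝ → ℝ} (hβ : ContDiff ℝ 1 β)
    (hβc : HasCompactSupport β) {a : ℝ × ℝ → ℝ} (ha : Measurable a) {c : ℝ}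
    (hac : ∀ p, ‖a p‖ ≤ c) {ψ : ℝ → ℝ} (hψ : Continuous ψ) {M : ℝ} (hψM : tsupport ψ ⊆ Icc (-M) M)
    {t₀ : ℝ} (h : Tendsto (fun s => ∫ x in Icc (-M) M, ‖a (s, x) - a (t₀, x)‖) (𝓝 t₀) (𝓝 0)) :
    Tendsto (fun ε => ∫ t, deriv β ((t - t₀) / ε) / ε * ∫ x, ψ x * a (t, x)) (𝓝[>] 0) (𝓝 0) := by
  have hψc : HasCompactSupport ψ := isCompact_Icc.of_isClosed_subset (isClosed_tsupport ψ) hψM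
  refine tendsto_integral_deriv_comp_sub_div_mul hβ hβc
    ((hψ.measurable.comp measurable_snd).mul ha).stronglyMeasurable.integral_prod_right'.measurable
    (fun t => norm_integral_le_of_norm_le
      ((hψ.integrable_of_hasCompactSupport hψc).norm.const_mul c) (ae_of_all _ fun x => ?_))
    (continuousAt_integral_mul_of_tendsto_setIntegral_norm_sub ha hac hψ hψM h)
  rw [Pi.mul_apply, norm_mul, mul_comm]
  exact mul_le_mul_of_nonneg_right (hac _) (norm_nonneg _)

theorem fderiv_mul_comp_fst_comp_snd_apply {h ψ : ℝ → ℝ} (hh : Differentiable ℝ h)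
    (hψ : Differentiable ℝ ψ) (p v : ℝ × ℝ) :
    fderiv ℝ (fun p : ℝ × ℝ => h p.1 * ψ p.2) p v =
      deriv h p.1 * v.1 * ψ p.2 + h p.1 * (deriv ψ p.2 * v.2) := by
  have h1 : HasFDerivAt (fun p : ℝ × ℝ => h p.1)
      (deriv h p.1 • ContinuousLinearMap.fst ℝ ℝ ℝ) p :=
    (hh p.1).hasDerivAt.comp_hasFDerivAt p hasFDerivAt_fst
  have h2 : HasFDerivAt (fun p : ℝ × ℝ => ψ p.2)
      (deriv ψ p.2 • ContinuousLinearMap.snd ℝ ℝ ℝ) p :=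
    (hψ p.2).hasDerivAt.comp_hasFDerivAt p hasFDerivAt_snd
  have h3 : HasFDerivAt (fun p : ℝ × ℝ => h p.1 * ψ p.2) _ p := h1.mul h2
  rw [h3.fderiv]
  simp only [add_apply, smul_apply, ContinuousLinearMap.coe_fst', ContinuousLinearMap.coe_snd',
    smul_eq_mul]
  ring

theorem integral_prod_mul_comp_fst {α β : Type*} [MeasurableSpace α] [MeasurableSpace β]
    {μ : Measure α} {ν : Measure β} [SFinite μ] [SFinite ν] (f : α → ℝ) {w : α × β → ℝ}
    (hi : Integrable (fun z => f z.1 * w z) (μ.prod ν)) :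
    ∫ z, f z.1 * w z ∂μ.prod ν = ∫ x, f x * ∫ y, w (x, y) ∂ν ∂μ := by
  simp only [integral_prod _ hi, integral_const_mul]

theorem tsupport_mul_comp_fst_comp_snd_subset {α β M : Type*} [TopologicalSpace α]
    [TopologicalSpace β] [MulZeroClass M] (f : α → M) (g : β → M) :
    tsupport (fun z : α × β => f z.1 * g z.2) ⊆ tsupport f ×ˢ tsupport g :=
  closure_minimal (fun _ hz => ⟨subset_closure (left_ne_zero_of_mul hz),
    subset_closure (right_ne_zero_of_mul hz)⟩) ((isClosed_tsupport f).prod (isClosed_tsupport g))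

theorem integrable_comp_fst_mul_comp_snd_mul {α β : Type*} [TopologicalSpace α]
    [TopologicalSpace β] [MeasurableSpace (α × β)] [OpensMeasurableSpace (α × β)]
    {μ : Measure (α × β)} [IsFiniteMeasureOnCompacts μ] {f : α → ℝ} {g : β → ℝ}
    (hf : Continuous f) (hfc : HasCompactSupport f) (hg : Continuous g) (hgc : HasCompactSupport g)
    {w : α × β → ℝ} (hw : AEStronglyMeasurable w μ) {c : ℝ} (hwc : ∀ z, ‖w z‖ ≤ c) :
    Integrable (fun z => f z.1 * (g z.2 * w z)) μ := by
  have hfg : HasCompactSupport fun z : α × β => f z.1 * g z.2 :=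
    (hfc.prod hgc).of_isClosed_subset (isClosed_tsupport _)
      (tsupport_mul_comp_fst_comp_snd_subset f g)
  have hfgi : Integrable (fun z : α × β => f z.1 * g z.2) μ :=
    (by fun_prop : Continuous fun z : α × β => f z.1 * g z.2).integrable_of_hasCompactSupport hfg
  simpa only [mul_assoc] using hfgi.mul_bdd hw (ae_of_all _ hwc)

theorem HasCompactSupport.exists_pos_tsupport_subset_Icc {M : Type*} [Zero M] {f : ℝ → M}
    (hf : HasCompactSupport f) : ∃ r > 0, tsupport f ⊆ Icc (-r) r := by
  obtain ⟨r, hr⟩ := hf.isBounded.subset_closedBall 0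
  refine ⟨max r 1, by positivity, hr.trans ?_⟩
  rw [Real.closedBall_eq_Icc, zero_sub, zero_add]
  exact Icc_subset_Icc (neg_le_neg (le_max_left r 1)) (le_max_left r 1)

/-- `μp - μm = ∂ₜ a + ∂ₓ b` in the sense of distributions on `(0, ∞) × ℝ`. -/
def IsDistribDivergence (μp μm : Measure (ℝ × ℝ)) (a b : ℝ × ℝ → ℝ) : Prop :=
  ∀ φ : ℝ × ℝ → ℝ, ContDiff ℝ 1 φ → HasCompactSupport φ → tsupport φ ⊆ {p : ℝ × ℝ | 0 < p.1} →
    (∫ p, φ p ∂μp) - (∫ p, φ p ∂μm) =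
      -∫ p in {p : ℝ × ℝ | 0 < p.1}, (fderiv ℝ φ p (1, 0) * a p + fderiv ℝ φ p (0, 1) * b p)

namespace IsDistribDivergence

variable {μp μm : Measure (ℝ × ℝ)} {a b : ℝ × ℝ → ℝ} {ca cb : ℝ}

theorem integral_mul_sub (hdiv : IsDistribDivergence μp μm a b) (ha : Measurable a)
    (hb : Measurable b) (hac : ∀ p, ‖a p‖ ≤ ca) (hbc : ∀ p, ‖b p‖ ≤ cb) {h ψ : ℝ → ℝ}
    (hh : ContDiff ℝ 1 h) (hhc : HasCompactSupport h) (hhpos : tsupport h ⊆ Ioi 0)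
    (hψ : ContDiff ℝ 1 ψ) (hψc : HasCompactSupport ψ) :
    (∫ p, h p.1 * ψ p.2 ∂μp) - ∫ p, h p.1 * ψ p.2 ∂μm =
      -((∫ t, deriv h t * ∫ x, ψ x * a (t, x)) + ∫ p, h p.1 * (deriv ψ p.2 * b p)) := by
  have hφs := tsupport_mul_comp_fst_comp_snd_subset h ψ
  have hφ := hdiv (fun p => h p.1 * ψ p.2) ((hh.comp contDiff_fst).mul (hψ.comp contDiff_snd))
    ((hhc.prod hψc).of_isClosed_subset (isClosed_tsupport _) hφs) fun p hp => hhpos (hφs hp).1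
  have hintegrand : ∀ p : ℝ × ℝ,
      fderiv ℝ (fun p : ℝ × ℝ => h p.1 * ψ p.2) p (1, 0) * a p +
        fderiv ℝ (fun p : ℝ × ℝ => h p.1 * ψ p.2) p (0, 1) * b p =
      deriv h p.1 * (ψ p.2 * a p) + h p.1 * (deriv ψ p.2 * b p) := fun p => by
    simp only [fderiv_mul_comp_fst_comp_snd_apply (hh.differentiable one_ne_zero)
      (hψ.differentiable one_ne_zero)]
    ring
  have hi₁ : Integrable fun p : ℝ × ℝ => deriv h p.1 * (ψ p.2 * a p) :=
    integrable_comp_fst_mul_comp_snd_mul (hh.continuous_deriv le_rfl) hhc.deriv hψ.continuous hψc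
      ha.aestronglyMeasurable hac
  have hi₂ : Integrable fun p : ℝ × ℝ => h p.1 * (deriv ψ p.2 * b p) :=
    integrable_comp_fst_mul_comp_snd_mul hh.continuous hhc (hψ.continuous_deriv le_rfl)
      hψc.deriv hb.aestronglyMeasurable hbc
  have hfubini : ∫ p : ℝ × ℝ, deriv h p.1 * (ψ p.2 * a p) =
      ∫ t, deriv h t * ∫ x, ψ x * a (t, x) := by
    rw [Measure.volume_eq_prod] at hi₁ ⊢
    exact integral_prod_mul_comp_fst _ hi₁
  rw [hφ, setIntegral_eq_integral_of_forall_compl_eq_zero fun p hp => ?_]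
  · simp only [hintegrand]
    rw [integral_add hi₁ hi₂, hfubini]
  · have hp' : p.1 ∉ tsupport h := fun h' => hp (hhpos h')
    rw [hintegrand, image_eq_zero_of_notMem_tsupport hp',
      image_eq_zero_of_notMem_tsupport fun h' => hp' (tsupport_deriv_subset h')]
    ring

theorem integral_comp_sub_div_mul_sub (hdiv : IsDistribDivergence μp μm a b)
    (ha : Measurable a) (hb : Measurable b) (hac : ∀ p, ‖a p‖ ≤ ca) (hbc : ∀ p, ‖b p‖ ≤ cb)
    {β : ℝ → ℝ} (hβ : ContDiff ℝ 1 β) (hβs : tsupport β ⊆ closedBall 0 1) {ψ : ℝ → ℝ}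
    (hψ : ContDiff ℝ 1 ψ) (hψc : HasCompactSupport ψ) {t₀ ε : ℝ} (hε : 0 < ε) (hεt : ε < t₀) :
    (∫ p, β ((p.1 - t₀) / ε) * ψ p.2 ∂μp) - ∫ p, β ((p.1 - t₀) / ε) * ψ p.2 ∂μm =
      -((∫ t, deriv β ((t - t₀) / ε) / ε * ∫ x, ψ x * a (t, x)) +
        ∫ p, β ((p.1 - t₀) / ε) * (deriv ψ p.2 * b p)) := by
  have hh : ContDiff ℝ 1 fun t => β ((t - t₀) / ε) :=
    hβ.comp ((contDiff_id.sub contDiff_const).div_const ε)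
  have hhs : tsupport (fun t => β ((t - t₀) / ε)) ⊆ closedBall t₀ ε :=
    tsupport_comp_sub_div_subset hβs hε
  have hdh : ∀ t, deriv (fun t => β ((t - t₀) / ε)) t = deriv β ((t - t₀) / ε) / ε := fun t => by
    have hd : HasDerivAt (fun t => β ((t - t₀) / ε)) (deriv β ((t - t₀) / ε) * (1 / ε)) t :=
      (hβ.differentiable one_ne_zero _).hasDerivAt.comp t
        (((hasDerivAt_id t).sub_const t₀).div_const ε)
    rw [hd.deriv, mul_one_div]
  rw [hdiv.integral_mul_sub ha hb hac hbc hh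
    ((isCompact_closedBall t₀ ε).of_isClosed_subset (isClosed_tsupport _) hhs)
    (hhs.trans fun t ht =>
      mem_Ioi.2 (by linarith [(abs_le.1 (Real.dist_eq t t₀ ▸ mem_closedBall.1 ht)).1]))
    hψ hψc]
  simp only [hdh]

theorem setIntegral_slice_eq (hdiv : IsDistribDivergence μp μm a b) [IsLocallyFiniteMeasure μp]
    [IsLocallyFiniteMeasure μm] (ha : Measurable a) (hb : Measurable b) (hac : ∀ p, ‖a p‖ ≤ ca)
    (hbc : ∀ p, ‖b p‖ ≤ cb) {t₀ : ℝ} (ht₀ : 0 < t₀)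
    (hcont : ∀ M : ℝ, 0 < M →
      Tendsto (fun s => ∫ x in Icc (-M) M, ‖a (s, x) - a (t₀, x)‖) (𝓝 t₀) (𝓝 0))
    {ψ : ℝ → ℝ} (hψ : ContDiff ℝ 1 ψ) (hψc : HasCompactSupport ψ) :
    ∫ p in {p : ℝ × ℝ | p.1 = t₀}, ψ p.2 ∂μp = ∫ p in {p : ℝ × ℝ | p.1 = t₀}, ψ p.2 ∂μm := by
  let κ : ContDiffBump (0 : ℝ) := ⟨1 / 2, 1, by norm_num, by norm_num⟩
  have hκ : ContDiff ℝ 1 κ := κ.contDiff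
  have hκs : tsupport κ ⊆ closedBall 0 1 := κ.tsupport_eq.subset
  have hκ0 : κ 0 = 1 := κ.one_of_mem_closedBall (mem_closedBall_self (by norm_num))
  obtain ⟨Cψ, hCψ⟩ := hψc.exists_bound_of_continuous hψ.continuous
  obtain ⟨Cψ', hCψ'⟩ := hψc.deriv.exists_bound_of_continuous (hψ.continuous_deriv le_rfl)
  obtain ⟨M, hM, hψM⟩ := hψc.exists_pos_tsupport_subset_Icc
  have hslice : ∀ (μ : Measure (ℝ × ℝ)) [IsLocallyFiniteMeasure μ],
      Tendsto (fun ε => ∫ p, κ ((p.1 - t₀) / ε) * ψ p.2 ∂μ) (𝓝[>] 0)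
        (𝓝 (∫ p in {p : ℝ × ℝ | p.1 = t₀}, ψ p.2 ∂μ)) := fun μ _ => by
    simpa only [hκ0, one_mul] using tendsto_integral_comp_sub_div_mul (F := fun p => ψ p.2)
      hκ.continuous hκs
      (hψ.continuous.comp continuous_snd).aestronglyMeasurable (fun p => hCψ p.2) hψc
      (fun p hp => image_eq_zero_of_notMem_tsupport hp) t₀
  have hfluxc : ∀ p : ℝ × ℝ, ‖deriv ψ p.2 * b p‖ ≤ Cψ' * cb := fun p => by
    rw [norm_mul]
    exact mul_le_mul (hCψ' _) (hbc p) (norm_nonneg _) ((norm_nonneg _).trans (hCψ' 0))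
  have hflux := tendsto_integral_comp_sub_div_mul_of_volume (F := fun p => deriv ψ p.2 * b p)
    hκ.continuous hκs
    (((hψ.continuous_deriv le_rfl).measurable.comp measurable_snd).mul hb).aestronglyMeasurable
    hfluxc hψc (fun p hp => by
      rw [image_eq_zero_of_notMem_tsupport fun h => hp (tsupport_deriv_subset h), zero_mul]) t₀
  have hdens := tendsto_integral_deriv_comp_sub_div_mul_integral hκ κ.hasCompactSupport ha hac
    hψ.continuous hψM (hcont M hM)
  have hrhs := (hdens.add hflux).neg
  rw [add_zero, neg_zero] at hrhs
  refine sub_eq_zero.1 (tendsto_nhds_unique ((hslice μp).sub (hslice μm)) (hrhs.congr' ?_))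
  filter_upwards [Ioo_mem_nhdsGT ht₀] with ε hε
  exact (hdiv.integral_comp_sub_div_mul_sub ha hb hac hbc hκ hκs hψ hψc hε.1 hε.2).symm

theorem restrict_slice_eq (hdiv : IsDistribDivergence μp μm a b) [IsLocallyFiniteMeasure μp]
    [IsLocallyFiniteMeasure μm] (ha : Measurable a) (hb : Measurable b) (hac : ∀ p, ‖a p‖ ≤ ca)
    (hbc : ∀ p, ‖b p‖ ≤ cb) {t₀ : ℝ} (ht₀ : 0 < t₀)
    (hcont : ∀ M : ℝ, 0 < M →
      Tendsto (fun s => ∫ x in Icc (-M) M, ‖a (s, x) - a (t₀, x)‖) (𝓝 t₀) (𝓝 0)) :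
    μp.restrict {p : ℝ × ℝ | p.1 = t₀} = μm.restrict {p : ℝ × ℝ | p.1 = t₀} := by
  refine Measure.ext_of_integral_contDiff_eq fun f hf hfc => ?_
  have hfslice : ∀ μ : Measure (ℝ × ℝ), ∫ p in {p : ℝ × ℝ | p.1 = t₀}, f p ∂μ =
      ∫ p in {p : ℝ × ℝ | p.1 = t₀}, f (t₀, p.2) ∂μ := fun μ =>
    setIntegral_congr_fun (measurableSet_eq_fun measurable_fst measurable_const)
      fun p hp => by rw [← show p.1 = t₀ from hp]
  have hψ : ContDiff ℝ 1 fun x => f (t₀, x) :=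
    (hf.of_le (mod_cast le_top)).comp (contDiff_const.prodMk contDiff_id)
  have hψc : HasCompactSupport fun x => f (t₀, x) :=
    HasCompactSupport.intro (hfc.image continuous_snd) fun x hx =>
      image_eq_zero_of_notMem_tsupport fun h => hx ⟨(t₀, x), h, rfl⟩
  rw [hfslice, hfslice]
  exact hdiv.setIntegral_slice_eq ha hb hac hbc ht₀ hcont hψ hψc

end IsDistribDivergence

/-- If μ_η = ∂ₜη(u) + ∂ₓq(u) is a locally finite signed measure (written as the
difference of mutually singular locally finite measures μp, μm) and u is strongly
time continuous with values in L¹_loc, then μ_η gives no mass to any time slice. -/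
theorem stmt_8 (u : ℝ × ℝ → ℝ × ℝ) (hmeas : Measurable u) (C : ℝ)
    (hbd : ∀ p, ‖u p‖ ≤ C)
    (η q : ℝ × ℝ → ℝ) (Kη Kq : NNReal) (hη : LipschitzWith Kη η) (hq : LipschitzWith Kq q)
    (hcont : ∀ t : ℝ, 0 < t → ∀ M : ℝ, 0 < M →
      Tendsto (fun s : ℝ => ∫ x in Icc (-M) M, ‖u (s, x) - u (t, x)‖) (𝓝 t) (𝓝 0))
    (μp μm : Measure (ℝ × ℝ)) [IsLocallyFiniteMeasure μp] [IsLocallyFiniteMeasure μm]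
    (hsing : μp ⟂ₘ μm)
    (hrepr : ∀ φ : ℝ × ℝ → ℝ, ContDiff ℝ 1 φ → HasCompactSupport φ →
      tsupport φ ⊆ {p : ℝ × ℝ | 0 < p.1} →
      (∫ p, φ p ∂μp) - (∫ p, φ p ∂μm) =
        -∫ p in {p : ℝ × ℝ | 0 < p.1},
          (fderiv ℝ φ p (1, 0) * η (u p) + fderiv ℝ φ p (0, 1) * q (u p))) :
    ∀ tb : ℝ, 0 < tb →
      μp {p : ℝ × ℝ | p.1 = tb} = 0 ∧ μm {p : ℝ × ℝ | p.1 = tb} = 0 := by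
  intro tb htb
  have hcontη : ∀ M : ℝ, 0 < M → Tendsto
      (fun s => ∫ x in Icc (-M) M, ‖η (u (s, x)) - η (u (tb, x))‖) (𝓝 tb) (𝓝 0) :=
    fun M hM => hη.tendsto_integral_norm_comp_sub
      (fun s => integrable_norm_sub_of_norm_le_s8 (hmeas.comp measurable_prodMk_left)
        (hmeas.comp measurable_prodMk_left) (fun x => hbd _) fun x => hbd _)
      (hcont tb htb M hM)
  have hslice := IsDistribDivergence.restrict_slice_eq (a := fun p => η (u p))
    (b := fun p => q (u p)) hrepr (hη.continuous.measurable.comp hmeas)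
    (hq.continuous.measurable.comp hmeas) (fun p => hη.norm_le_add_mul (hbd p))
    (fun p => hq.norm_le_add_mul (hbd p)) htb hcontη
  exact ⟨hsing.measure_eq_zero_of_restrict_eq hslice,
    hsing.symm.measure_eq_zero_of_restrict_eq hslice.symm⟩
end
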